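/- arXiv:2401.06254 — 5 statements merged into one kernel-verified Lean document; each statement's English description precedes it below -/
import Mathlib

section
/- There is a weight-preserving bijection F_{a,b} from pairs (λ, μ) where λ has at most a parts and μ has at most b parts, to pairs (ν, ρ) where ν has at most a+b parts and ρ fits in a b × a box (at most b parts, each at most a), such that |λ| + |μ| = |ν| + |ρ|. -/
/-- A partition: a weakly decreasing list of positive integers. -/
def PartList (L : List ℕ) : Prop := L.Pairwise (· ≥ ·) ∧ ∀ x ∈ L, 0 < x

/-- A partition of `n`. -/
def PartitionOf (n : ℕ) (L : List ℕ) : Prop := PartList L ∧ L.sum = n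

/-- `L` has an `h`-fixed hook at 0-indexed position `i` (i.e. row `i+1`):
the first-column hook length `λ_{i+1} + length - (i+1)` equals `(i+1) + h`. -/
def FixedHook (h : ℤ) (L : List ℕ) (i : ℕ) : Prop :=
  ∃ hi : i < L.length, (L.get ⟨i, hi⟩ : ℤ) + L.length - (i + 1) = (i + 1) + h

/-- `h`-fixed hook at row `i+1` arising from a part of size `k`. -/
def FixedHookPart (h : ℤ) (k : ℕ) (L : List ℕ) (i : ℕ) : Prop :=
  ∃ hi : i < L.length, L.get ⟨i, hi⟩ = k ∧ (k : ℤ) + L.length - (i + 1) = (i + 1) + h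

namespace S2


def pad (n : ℕ) (L : List ℕ) : Fin n → ℕ := fun i => L.getD i 0

def unpad {n : ℕ} (v : Fin n → ℕ) : List ℕ := (List.ofFn v).filter (fun x => 0 < x)

lemma pad_antitone {n : ℕ} {L : List ℕ} (hs : L.Pairwise (· ≥ ·)) (_hl : L.length ≤ n) :
    Antitone (pad n L) := by
  intro i j hij
  unfold pad
  by_cases hj : (j : ℕ) < L.length
  · have hi : (i : ℕ) < L.length := lt_of_le_of_lt hij hj
    rw [List.getD_eq_getElem _ _ hi, List.getD_eq_getElem _ _ hj]
    have := hs.rel_get_of_le (a := ⟨i, hi⟩) (b := ⟨j, hj⟩) hij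
    simpa using this
  · rw [List.getD_eq_default _ _ (not_lt.1 hj)]
    exact Nat.zero_le _

lemma ofFn_pad (n : ℕ) (L : List ℕ) (hl : L.length ≤ n) :
    List.ofFn (pad n L) = L ++ List.replicate (n - L.length) 0 := by
  apply List.ext_getElem
  · simp; omega
  · intro i h1 h2
    simp only [List.getElem_ofFn]
    unfold pad
    by_cases hi : i < L.length
    · rw [List.getD_eq_getElem _ _ hi, List.getElem_append_left hi]
    · rw [List.getD_eq_default _ _ (not_lt.1 hi), List.getElem_append_right (not_lt.1 hi)]
      simp

lemma sum_pad (n : ℕ) (L : List ℕ) (hl : L.length ≤ n) :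
    ∑ i, pad n L i = L.sum := by
  rw [← List.sum_ofFn, ofFn_pad n L hl]
  simp

lemma unpad_pad {n : ℕ} {L : List ℕ} (hp : ∀ x ∈ L, 0 < x) (hl : L.length ≤ n) :
    unpad (pad n L) = L := by
  unfold unpad
  rw [ofFn_pad n L hl, List.filter_append]
  have h1 : L.filter (fun x => 0 < x) = L := List.filter_eq_self.2 (by simpa using hp)
  have h2 : (List.replicate (n - L.length) 0).filter (fun x : ℕ => 0 < x) = [] := by
    simp [List.filter_eq_nil_iff]
  rw [h1, h2, List.append_nil]

lemma sorted_ofFn {n : ℕ} {v : Fin n → ℕ} (hv : Antitone v) :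
    (List.ofFn v).Pairwise (· ≥ ·) := by
  rw [List.pairwise_iff_getElem]
  intro i j hi hj hij
  simp only [List.getElem_ofFn]
  exact hv (show (⟨i, by simpa using hi⟩ : Fin n) ≤ ⟨j, by simpa using hj⟩ by
    simp only [Fin.mk_le_mk]; omega)

lemma unpad_partlist {n : ℕ} {v : Fin n → ℕ} (hv : Antitone v) :
    (unpad v).Pairwise (· ≥ ·) ∧ ∀ x ∈ unpad v, 0 < x := by
  constructor
  · exact (sorted_ofFn hv).filter _
  · intro x hx
    have := List.of_mem_filter hx
    simpa using this

lemma unpad_length {n : ℕ} (v : Fin n → ℕ) : (unpad v).length ≤ n := by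
  have := List.length_filter_le (fun x => decide (0 < x)) (List.ofFn v)
  simpa [unpad] using this

lemma unpad_mem {n : ℕ} {v : Fin n → ℕ} {x : ℕ} (hx : x ∈ unpad v) : ∃ j, x = v j := by
  have := List.mem_of_mem_filter hx
  rw [List.mem_ofFn] at this
  obtain ⟨j, hj⟩ := this
  exact ⟨j, hj.symm⟩

lemma sum_unpad {n : ℕ} (v : Fin n → ℕ) : (unpad v).sum = ∑ i, v i := by
  rw [← List.sum_ofFn]
  have hperm := (List.filter_append_perm (fun x => 0 < x) (List.ofFn v)).sum_eq
  rw [List.sum_append] at hperm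
  have h0 : ((List.ofFn v).filter (fun x => !decide (0 < x))).sum = 0 := by
    apply List.sum_eq_zero
    intro x hx
    have := List.of_mem_filter hx
    simp at this
    omega
  unfold unpad
  omega

lemma filter_eq_takeWhile {l : List ℕ} (hs : l.Pairwise (· ≥ ·)) :
    l.filter (fun x => 0 < x) = l.takeWhile (fun x => 0 < x) := by
  induction l with
  | nil => rfl
  | cons x t ih =>
    rw [List.pairwise_cons] at hs
    by_cases hx : 0 < x
    · rw [List.filter_cons_of_pos (by simpa), List.takeWhile_cons_of_pos (by simpa), ih hs.2]
    · have hx0 : x = 0 := by omega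
      rw [List.filter_cons_of_neg (by simp [hx0]), List.takeWhile_cons_of_neg (by simp [hx0])]
      rw [List.filter_eq_nil_iff]
      intro y hy
      have := hs.1 y hy
      simp
      omega

lemma pad_unpad {n : ℕ} {v : Fin n → ℕ} (hv : Antitone v) :
    pad n (unpad v) = v := by
  funext i
  unfold pad unpad
  by_cases hi : (i : ℕ) < ((List.ofFn v).filter (fun x => 0 < x)).length
  · rw [List.getD_eq_getElem _ _ hi]
    have hpre : (List.ofFn v).filter (fun x => 0 < x) <+: List.ofFn v := by
      rw [filter_eq_takeWhile (sorted_ofFn hv)]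
      exact List.takeWhile_prefix _
    rw [hpre.getElem hi]
    simp
  · rw [List.getD_eq_default _ _ (not_lt.1 hi)]
    by_contra hvi
    have hvi' : 0 < v i := Nat.pos_of_ne_zero (fun h => hvi h.symm)
    -- all indices j ≤ i give positive values, so filter length ≥ i+1
    have htake : ((List.ofFn v).take ((i : ℕ) + 1)).filter (fun x => 0 < x)
        = (List.ofFn v).take ((i : ℕ) + 1) := by
      apply List.filter_eq_self.2
      intro y hy
      have hlen : ((List.ofFn v).take ((i : ℕ) + 1)).length = (i : ℕ) + 1 := by
        rw [List.length_take, List.length_ofFn]; omega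
      obtain ⟨k, hk, hky⟩ := List.mem_iff_getElem.1 hy
      rw [List.getElem_take] at hky
      rw [hlen] at hk
      rw [List.getElem_ofFn] at hky
      simp only [decide_eq_true_eq]
      rw [← hky]
      exact lt_of_lt_of_le hvi' (hv (by simp only [Fin.le_def]; omega))
    have hsplit : (List.ofFn v).filter (fun x => 0 < x)
        = ((List.ofFn v).take ((i:ℕ)+1)).filter (fun x => 0 < x)
          ++ ((List.ofFn v).drop ((i:ℕ)+1)).filter (fun x => 0 < x) := by
      rw [← List.filter_append, List.take_append_drop]
    have : ((List.ofFn v).filter (fun x => 0 < x)).length ≥ (i : ℕ) + 1 := by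
      rw [hsplit, List.length_append, htake]
      have : ((List.ofFn v).take ((i : ℕ) + 1)).length = (i : ℕ) + 1 := by
        rw [List.length_take, List.length_ofFn]; omega
      omega
    omega



/-! ### Generic upward-closed sets in `Fin n` -/

lemma mem_upclosed_iff {n : ℕ} (S : Finset (Fin n))
    (h : ∀ ⦃i i' : Fin n⦄, i ∈ S → i ≤ i' → i' ∈ S) (i : Fin n) :
    i ∈ S ↔ n - S.card ≤ i.val := by
  constructor
  · intro hi
    have hsub : Finset.Ici i ⊆ S := fun x hx => h hi (Finset.mem_Ici.1 hx)
    have := Finset.card_le_card hsub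
    rw [Fin.card_Ici] at this
    omega
  · intro hi
    rcases S.eq_empty_or_nonempty with rfl | hne
    · have := i.isLt; simp at hi; omega
    · obtain ⟨m, hm, hmin⟩ := S.exists_min_image id hne
      have hsub : S ⊆ Finset.Ici m := fun x hx => Finset.mem_Ici.2 (hmin x hx)
      have hcard := Finset.card_le_card hsub
      rw [Fin.card_Ici] at hcard
      exact h hm (by rw [Fin.le_def]; have := i.isLt; omega)

lemma card_top_filter {n r : ℕ} (hr : r ≤ n) :
    (Finset.univ.filter (fun i : Fin n => n - r ≤ i.val)).card = r := by
  rcases Nat.eq_zero_or_pos r with rfl | hpos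
  · rw [Finset.filter_false_of_mem, Finset.card_empty]
    intro i _
    have := i.isLt
    omega
  · have : (Finset.univ.filter (fun i : Fin n => n - r ≤ i.val))
        = Finset.Ici (⟨n - r, by omega⟩ : Fin n) := by
      ext i
      simp [Finset.mem_Ici, Fin.le_def]
    rw [this, Fin.card_Ici]
    show n - (n - r) = r
    omega

/-! ### Positions -/

def cnt (a b : ℕ) (r : Fin b → ℕ) (i : Fin a) : ℕ :=
  (Finset.univ.filter (fun j : Fin b => a - r j ≤ i.val)).card

lemma cnt_le_b (a b : ℕ) (r : Fin b → ℕ) (i : Fin a) : cnt a b r i ≤ b := by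
  have h1 : (Finset.univ.filter (fun j : Fin b => a - r j ≤ i.val)).card ≤
      (Finset.univ : Finset (Fin b)).card := Finset.card_filter_le _ _
  simpa [cnt] using h1

def P (a b : ℕ) (r : Fin b → ℕ) (j : Fin b) : Fin (a + b) :=
  ⟨a - r j + j.val, by have := j.isLt; omega⟩

def Q (a b : ℕ) (r : Fin b → ℕ) (i : Fin a) : Fin (a + b) :=
  ⟨i.val + cnt a b r i, by have := i.isLt; have := cnt_le_b a b r i; omega⟩

def M (a b : ℕ) (r : Fin b → ℕ) : Fin a ⊕ Fin b → Fin (a + b) :=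
  Sum.elim (Q a b r) (P a b r)

lemma cnt_ge {a b : ℕ} {r : Fin b → ℕ} (hr : Antitone r) {j : Fin b} {i : Fin a}
    (h : a - r j ≤ i.val) : j.val + 1 ≤ cnt a b r i := by
  have hsub : Finset.Iic j ⊆ Finset.univ.filter (fun j' : Fin b => a - r j' ≤ i.val) := by
    intro j' hj'
    rw [Finset.mem_Iic] at hj'
    have := hr hj'
    simp only [Finset.mem_filter, Finset.mem_univ, true_and]
    omega
  have := Finset.card_le_card hsub
  rw [Fin.card_Iic] at this
  exact this

lemma cnt_lt {a b : ℕ} {r : Fin b → ℕ} (hr : Antitone r) {j : Fin b} {i : Fin a}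
    (h : i.val < a - r j) : cnt a b r i ≤ j.val := by
  have hsub : Finset.univ.filter (fun j' : Fin b => a - r j' ≤ i.val) ⊆ Finset.Iio j := by
    intro j' hj'
    simp only [Finset.mem_filter, Finset.mem_univ, true_and] at hj'
    rw [Finset.mem_Iio]
    by_contra hle
    push_neg at hle
    have := hr hle
    omega
  have := Finset.card_le_card hsub
  rw [Fin.card_Iio] at this
  exact this

lemma cnt_mono (a b : ℕ) (r : Fin b → ℕ) : Monotone (cnt a b r) := by
  intro i i' h
  apply Finset.card_le_card
  intro j hj
  simp only [Finset.mem_filter, Finset.mem_univ, true_and] at hj ⊢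
  rw [Fin.le_def] at h
  omega

lemma Q_mono (a b : ℕ) (r : Fin b → ℕ) : Monotone (Q a b r) := by
  intro i i' h
  rw [Fin.le_def]
  have := cnt_mono a b r h
  rw [Fin.le_def] at h
  simp only [Q]
  omega

lemma Q_strictMono (a b : ℕ) (r : Fin b → ℕ) : StrictMono (Q a b r) := by
  intro i i' h
  rw [Fin.lt_def]
  have := cnt_mono a b r (le_of_lt h)
  rw [Fin.lt_def] at h
  simp only [Q]
  omega

lemma P_strictMono {a b : ℕ} {r : Fin b → ℕ} (hr : Antitone r) : StrictMono (P a b r) := by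
  intro j j' h
  rw [Fin.lt_def]
  have := hr (le_of_lt h)
  rw [Fin.lt_def] at h
  simp only [P]
  omega

lemma Q_ne_P {a b : ℕ} {r : Fin b → ℕ} (hr : Antitone r) (i : Fin a) (j : Fin b) :
    Q a b r i ≠ P a b r j := by
  intro heq
  rw [Fin.ext_iff] at heq
  simp only [Q, P] at heq
  by_cases hcase : a - r j ≤ i.val
  · have := cnt_ge hr hcase
    omega
  · push_neg at hcase
    have := cnt_lt hr hcase
    omega

lemma M_bijective {a b : ℕ} {r : Fin b → ℕ} (hr : Antitone r) :
    Function.Bijective (M a b r) := by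
  rw [Fintype.bijective_iff_injective_and_card]
  refine ⟨?_, by simp⟩
  intro x y hxy
  rcases x with i | j <;> rcases y with i' | j'
  · simp only [M, Sum.elim_inl] at hxy
    exact congrArg Sum.inl ((Q_strictMono a b r).injective hxy)
  · simp only [M, Sum.elim_inl, Sum.elim_inr] at hxy
    exact absurd hxy (Q_ne_P hr i j')
  · simp only [M, Sum.elim_inl, Sum.elim_inr] at hxy
    exact absurd hxy.symm (Q_ne_P hr i' j)
  · simp only [M, Sum.elim_inr] at hxy
    exact congrArg Sum.inr ((P_strictMono hr).injective hxy)

noncomputable def EqM (a b : ℕ) (r : Fin b → ℕ) (hr : Antitone r) : (Fin a ⊕ Fin b) ≃ Fin (a + b) :=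
  Equiv.ofBijective (M a b r) (M_bijective hr)

lemma EqM_apply (a b : ℕ) (r : Fin b → ℕ) (hr : Antitone r) (x : Fin a ⊕ Fin b) :
    EqM a b r hr x = M a b r x := rfl

lemma EqM_symm_M (a b : ℕ) (r : Fin b → ℕ) (hr : Antitone r) (x : Fin a ⊕ Fin b) :
    (EqM a b r hr).symm (M a b r x) = x := by
  rw [← EqM_apply a b r hr x, Equiv.symm_apply_apply]

/-! ### The forward statistic ρ -/

def fseq (a : ℕ) (lam : Fin a → ℕ) (i : Fin a) : ℕ := lam i + (a - 1 - i.val)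

def rho (a b : ℕ) (lam : Fin a → ℕ) (mu : Fin b → ℕ) (j : Fin b) : ℕ :=
  (Finset.univ.filter (fun i : Fin a => fseq a lam i < mu j)).card

lemma fseq_anti {a : ℕ} {lam : Fin a → ℕ} (hlam : Antitone lam) : Antitone (fseq a lam) := by
  intro i i' h
  have := hlam h
  rw [Fin.le_def] at h
  simp only [fseq]
  omega

lemma rho_le_a (a b : ℕ) (lam : Fin a → ℕ) (mu : Fin b → ℕ) (j : Fin b) :
    rho a b lam mu j ≤ a := by
  have h1 : (Finset.univ.filter (fun i : Fin a => fseq a lam i < mu j)).card ≤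
      (Finset.univ : Finset (Fin a)).card := Finset.card_filter_le _ _
  simpa [rho] using h1

lemma mem_rho_iff {a b : ℕ} {lam : Fin a → ℕ} (hlam : Antitone lam) (mu : Fin b → ℕ)
    (j : Fin b) (i : Fin a) :
    fseq a lam i < mu j ↔ a - rho a b lam mu j ≤ i.val := by
  have := mem_upclosed_iff (Finset.univ.filter (fun i : Fin a => fseq a lam i < mu j))
    (fun i i' hi hle => by
      simp only [Finset.mem_filter, Finset.mem_univ, true_and] at hi ⊢
      exact lt_of_le_of_lt (fseq_anti hlam hle) hi) i
  simp only [Finset.mem_filter, Finset.mem_univ, true_and] at this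
  rw [this]
  rfl

lemma rho_anti {a b : ℕ} (lam : Fin a → ℕ) {mu : Fin b → ℕ} (hmu : Antitone mu) :
    Antitone (rho a b lam mu) := by
  intro j j' h
  apply Finset.card_le_card
  intro i hi
  simp only [Finset.mem_filter, Finset.mem_univ, true_and] at hi ⊢
  exact lt_of_lt_of_le hi (hmu h)

lemma rho_le_mu {a b : ℕ} {lam : Fin a → ℕ} (hlam : Antitone lam) (mu : Fin b → ℕ)
    (j : Fin b) : rho a b lam mu j ≤ mu j := by
  rcases Nat.eq_zero_or_pos (rho a b lam mu j) with h0 | hpos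
  · omega
  · have hra := rho_le_a a b lam mu j
    have ha : 0 < a := by omega
    set rj := rho a b lam mu j
    have hmem := (mem_rho_iff hlam mu j ⟨a - rj, by omega⟩).2 (le_refl _)
    simp only [fseq] at hmem
    omega

lemma mu_sub_rho_anti {a b : ℕ} {lam : Fin a → ℕ} {mu : Fin b → ℕ}
    (hlam : Antitone lam) (hmu : Antitone mu) :
    Antitone (fun j => mu j - rho a b lam mu j) := by
  intro j j' h
  simp only
  set Sj := Finset.univ.filter (fun i : Fin a => fseq a lam i < mu j) with hSj
  set Sj' := Finset.univ.filter (fun i : Fin a => fseq a lam i < mu j') with hSj'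
  have hsub : Sj' ⊆ Sj := by
    intro i hi
    rw [hSj'] at hi
    rw [hSj]
    simp only [Finset.mem_filter, Finset.mem_univ, true_and] at hi ⊢
    exact lt_of_lt_of_le hi (hmu h)
  have hrj : rho a b lam mu j = Sj.card := rfl
  have hrj' : rho a b lam mu j' = Sj'.card := rfl
  have hdiff : (Sj \ Sj').card = Sj.card - Sj'.card := Finset.card_sdiff_of_subset hsub
  have hwin : (Sj \ Sj').card ≤ mu j - mu j' := by
    have hinj : Set.InjOn (fseq a lam) ↑(Sj \ Sj') := by
      intro x _ y _ hxy
      by_contra hne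
      rcases Ne.lt_or_gt hne with hlt | hlt
      · have h3 : fseq a lam y < fseq a lam x := by
          simp only [fseq]
          have := hlam (le_of_lt hlt)
          rw [Fin.lt_def] at hlt
          have hy := y.isLt
          omega
        omega
      · have h3 : fseq a lam x < fseq a lam y := by
          simp only [fseq]
          have := hlam (le_of_lt hlt)
          rw [Fin.lt_def] at hlt
          have hx := x.isLt
          omega
        omega
    have hmaps : ∀ i ∈ Sj \ Sj', fseq a lam i ∈ Finset.Ico (mu j') (mu j) := by
      intro i hi
      rw [Finset.mem_sdiff, hSj, hSj'] at hi
      simp only [Finset.mem_filter, Finset.mem_univ, true_and, not_lt] at hi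
      rw [Finset.mem_Ico]
      omega
    have := Finset.card_le_card_of_injOn (fseq a lam) hmaps hinj
    rwa [Nat.card_Ico] at this
  have h1 := rho_le_mu hlam mu j
  have h2 := rho_le_mu hlam mu j'
  have h3 := hmu h
  have h4 := Finset.card_le_card hsub
  omega

/-! ### Cross inequalities -/

lemma cross1 {a b : ℕ} {lam : Fin a → ℕ} {mu : Fin b → ℕ}
    (hlam : Antitone lam) (hmu : Antitone mu) {i : Fin a} {j : Fin b}
    (h : (Q a b (rho a b lam mu) i).val < (P a b (rho a b lam mu) j).val) :
    mu j - rho a b lam mu j ≤ lam i := by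
  have hr : Antitone (rho a b lam mu) := rho_anti lam hmu
  have hia : i.val < a - rho a b lam mu j := by
    by_contra hc
    push_neg at hc
    have := cnt_ge hr hc
    simp only [Q, P] at h
    omega
  have ha := i.isLt
  have hrle := rho_le_a a b lam mu j
  set i0 : Fin a := ⟨a - rho a b lam mu j - 1, by omega⟩ with hi0
  have hval : (i0 : ℕ) = a - rho a b lam mu j - 1 := rfl
  have hnot : ¬ (fseq a lam i0 < mu j) := by
    rw [mem_rho_iff hlam]
    omega
  simp only [fseq] at hnot
  push_neg at hnot
  have hmono : lam i0 ≤ lam i := hlam (by rw [Fin.le_def]; omega)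
  omega

lemma cross2 {a b : ℕ} {lam : Fin a → ℕ} {mu : Fin b → ℕ}
    (hlam : Antitone lam) (hmu : Antitone mu) {i : Fin a} {j : Fin b}
    (h : (P a b (rho a b lam mu) j).val < (Q a b (rho a b lam mu) i).val) :
    lam i ≤ mu j - rho a b lam mu j := by
  have hr : Antitone (rho a b lam mu) := rho_anti lam hmu
  have hia : a - rho a b lam mu j ≤ i.val := by
    by_contra hc
    push_neg at hc
    have := cnt_lt hr hc
    simp only [Q, P] at h
    omega
  have ha := i.isLt
  have hrle := rho_le_a a b lam mu j
  have hpos : 1 ≤ rho a b lam mu j := by omega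
  set i1 : Fin a := ⟨a - rho a b lam mu j, by omega⟩ with hi1
  have hval : (i1 : ℕ) = a - rho a b lam mu j := rfl
  have hmem : fseq a lam i1 < mu j := by
    rw [mem_rho_iff hlam]
  simp only [fseq] at hmem
  have hmono : lam i ≤ lam i1 := hlam (by rw [Fin.le_def]; omega)
  omega

/-! ### Forward map -/

noncomputable def fwdnu (a b : ℕ) (lam : Fin a → ℕ) (mu : Fin b → ℕ)
    (hmu : Antitone mu) : Fin (a + b) → ℕ :=
  fun q => Sum.elim lam (fun j => mu j - rho a b lam mu j)
    ((EqM a b (rho a b lam mu) (rho_anti lam hmu)).symm q)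

lemma fwdnu_M {a b : ℕ} (lam : Fin a → ℕ) (mu : Fin b → ℕ) (hmu : Antitone mu)
    (x : Fin a ⊕ Fin b) :
    fwdnu a b lam mu hmu (M a b (rho a b lam mu) x) =
      Sum.elim lam (fun j => mu j - rho a b lam mu j) x := by
  unfold fwdnu
  rw [EqM_symm_M]

lemma fwdnu_anti {a b : ℕ} {lam : Fin a → ℕ} {mu : Fin b → ℕ}
    (hlam : Antitone lam) (hmu : Antitone mu) : Antitone (fwdnu a b lam mu hmu) := by
  intro q q' hqq
  rcases eq_or_lt_of_le hqq with rfl | hlt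
  · exact le_refl _
  have hr : Antitone (rho a b lam mu) := rho_anti lam hmu
  obtain ⟨x, rfl⟩ : ∃ x, M a b (rho a b lam mu) x = q :=
    ⟨(EqM a b (rho a b lam mu) hr).symm q, (EqM a b (rho a b lam mu) hr).apply_symm_apply q⟩
  obtain ⟨y, rfl⟩ : ∃ y, M a b (rho a b lam mu) y = q' :=
    ⟨(EqM a b (rho a b lam mu) hr).symm q', (EqM a b (rho a b lam mu) hr).apply_symm_apply q'⟩
  rw [fwdnu_M, fwdnu_M]
  rcases x with i | j <;> rcases y with i' | j'
  · simp only [Sum.elim_inl]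
    apply hlam
    by_contra hc
    push_neg at hc
    exact absurd (Q_strictMono a b (rho a b lam mu) hc) (by
      simp only [M, Sum.elim_inl] at hlt
      exact lt_asymm hlt)
  · simp only [Sum.elim_inl, Sum.elim_inr]
    apply cross1 hlam hmu
    simp only [M, Sum.elim_inl, Sum.elim_inr] at hlt
    rw [Fin.lt_def] at hlt
    exact hlt
  · simp only [Sum.elim_inl, Sum.elim_inr]
    apply cross2 hlam hmu
    simp only [M, Sum.elim_inl, Sum.elim_inr] at hlt
    rw [Fin.lt_def] at hlt
    exact hlt
  · simp only [Sum.elim_inr]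
    apply mu_sub_rho_anti hlam hmu
    by_contra hc
    push_neg at hc
    exact absurd (P_strictMono hr hc) (by
      simp only [M, Sum.elim_inr] at hlt
      exact lt_asymm hlt)

/-! ### Backward map pieces -/

lemma bwd1_anti {a b : ℕ} {nu : Fin (a + b) → ℕ} (hnu : Antitone nu) (r : Fin b → ℕ) :
    Antitone (fun i => nu (M a b r (Sum.inl i))) := by
  intro i i' h
  exact hnu (Q_mono a b r h)

lemma bwd2_anti {a b : ℕ} {nu : Fin (a + b) → ℕ} {r : Fin b → ℕ}
    (hnu : Antitone nu) (hr : Antitone r) :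
    Antitone (fun j => nu (M a b r (Sum.inr j)) + r j) := by
  intro j j' h
  have hP : P a b r j ≤ P a b r j' := by
    rw [Fin.le_def]
    have := hr h
    rw [Fin.le_def] at h
    simp only [P]
    omega
  exact Nat.add_le_add (hnu hP) (hr h)

lemma bwd_mem {a b : ℕ} {nu : Fin (a + b) → ℕ} {r : Fin b → ℕ}
    (hnu : Antitone nu) (hr : Antitone r) (hra : ∀ j, r j ≤ a) (j : Fin b) (i : Fin a) :
    fseq a (fun i => nu (M a b r (Sum.inl i))) i < nu (M a b r (Sum.inr j)) + r j ↔
      a - r j ≤ i.val := by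
  have hi := i.isLt
  have hrj := hra j
  simp only [fseq, M, Sum.elim_inl, Sum.elim_inr]
  constructor
  · intro hlt
    by_contra hc
    push_neg at hc
    have hcnt := cnt_lt hr hc
    have hle : nu (P a b r j) ≤ nu (Q a b r i) := by
      apply hnu
      rw [Fin.le_def]
      simp only [Q, P]
      omega
    omega
  · intro hge
    have hcnt := cnt_ge hr hge
    have hle : nu (Q a b r i) ≤ nu (P a b r j) := by
      apply hnu
      rw [Fin.le_def]
      simp only [Q, P]
      omega
    omega

lemma rho_bwd {a b : ℕ} {nu : Fin (a + b) → ℕ} {r : Fin b → ℕ}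
    (hnu : Antitone nu) (hr : Antitone r) (hra : ∀ j, r j ≤ a) :
    rho a b (fun i => nu (M a b r (Sum.inl i))) (fun j => nu (M a b r (Sum.inr j)) + r j) = r := by
  funext j
  unfold rho
  beta_reduce
  rw [Finset.filter_congr (fun i (_ : i ∈ Finset.univ) => bwd_mem hnu hr hra j i)]
  exact card_top_filter (hra j)

/-! ### The core equivalence on padded vectors -/

def SrcV (a b : ℕ) := {p : (Fin a → ℕ) × (Fin b → ℕ) // Antitone p.1 ∧ Antitone p.2}
def TgtV (a b : ℕ) := {p : (Fin (a + b) → ℕ) × (Fin b → ℕ) //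
  Antitone p.1 ∧ Antitone p.2 ∧ ∀ j, p.2 j ≤ a}

noncomputable def coreEquiv (a b : ℕ) : SrcV a b ≃ TgtV a b where
  toFun s := ⟨(fwdnu a b s.val.1 s.val.2 s.prop.2, rho a b s.val.1 s.val.2),
    fwdnu_anti s.prop.1 s.prop.2, rho_anti _ s.prop.2, fun j => rho_le_a a b _ _ j⟩
  invFun t := ⟨(fun i => t.val.1 (M a b t.val.2 (Sum.inl i)),
               fun j => t.val.1 (M a b t.val.2 (Sum.inr j)) + t.val.2 j),
    bwd1_anti t.prop.1 _, bwd2_anti t.prop.1 t.prop.2.1⟩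
  left_inv s := by
    obtain ⟨⟨lam, mu⟩, hlam, hmu⟩ := s
    apply Subtype.ext
    refine Prod.ext_iff.mpr ⟨?_, ?_⟩
    · funext i
      show fwdnu a b lam mu hmu (M a b (rho a b lam mu) (Sum.inl i)) = lam i
      rw [fwdnu_M]
      simp only [Sum.elim_inl]
    · funext j
      show fwdnu a b lam mu hmu (M a b (rho a b lam mu) (Sum.inr j)) + rho a b lam mu j = mu j
      rw [fwdnu_M]
      simp only [Sum.elim_inr]
      exact Nat.sub_add_cancel (rho_le_mu hlam mu j)
  right_inv t := by
    obtain ⟨⟨nu, r⟩, hnu, hr, hra⟩ := t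
    have hrho := rho_bwd (a := a) (b := b) hnu hr hra
    apply Subtype.ext
    refine Prod.ext_iff.mpr ⟨?_, ?_⟩
    · funext q
      obtain ⟨x, hx⟩ : ∃ x, M a b r x = q :=
        ⟨(EqM a b r hr).symm q, (EqM a b r hr).apply_symm_apply q⟩
      have hx' : M a b (rho a b (fun i => nu (M a b r (Sum.inl i)))
          (fun j => nu (M a b r (Sum.inr j)) + r j)) x = q := by rw [hrho]; exact hx
      show fwdnu a b (fun i => nu (M a b r (Sum.inl i)))
          (fun j => nu (M a b r (Sum.inr j)) + r j) (bwd2_anti hnu hr) q = nu q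
      have h1 : fwdnu a b (fun i => nu (M a b r (Sum.inl i)))
          (fun j => nu (M a b r (Sum.inr j)) + r j) (bwd2_anti hnu hr) q
          = Sum.elim (fun i => nu (M a b r (Sum.inl i)))
              (fun j => (nu (M a b r (Sum.inr j)) + r j) -
                rho a b (fun i => nu (M a b r (Sum.inl i)))
                  (fun j => nu (M a b r (Sum.inr j)) + r j) j) x := by
        conv_lhs => rw [← hx']
        rw [fwdnu_M]
      rw [h1]
      cases x with
      | inl i =>
        simp only [Sum.elim_inl]
        rw [hx]
      | inr j =>
        simp only [Sum.elim_inr]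
        rw [hrho, hx]
        show nu q + r j - r j = nu q
        omega
    · exact hrho

lemma coreEquiv_sum (a b : ℕ) (s : SrcV a b) :
    (∑ q, ((coreEquiv a b) s).val.1 q) + (∑ j, ((coreEquiv a b) s).val.2 j)
      = (∑ i, s.val.1 i) + (∑ j, s.val.2 j) := by
  obtain ⟨⟨lam, mu⟩, hlam, hmu⟩ := s
  show (∑ q, fwdnu a b lam mu hmu q) + (∑ j, rho a b lam mu j) = (∑ i, lam i) + (∑ j, mu j)
  have hr : Antitone (rho a b lam mu) := rho_anti lam hmu
  have h1 : (∑ q, fwdnu a b lam mu hmu q)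
      = ∑ x : Fin a ⊕ Fin b, Sum.elim lam (fun j => mu j - rho a b lam mu j) x := by
    rw [← Equiv.sum_comp (EqM a b (rho a b lam mu) hr).symm
      (Sum.elim lam (fun j => mu j - rho a b lam mu j))]
    rfl
  rw [h1, Fintype.sum_sum_type]
  simp only [Sum.elim_inl, Sum.elim_inr]
  have h2 : (∑ j, (mu j - rho a b lam mu j)) + (∑ j, rho a b lam mu j) = ∑ j, mu j := by
    rw [← Finset.sum_add_distrib]
    exact Finset.sum_congr rfl (fun j _ => Nat.sub_add_cancel (rho_le_mu hlam mu j))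
  omega


/-! ### Gluing: lists vs padded vectors -/

lemma pad_le {n c : ℕ} {L : List ℕ} (h : ∀ x ∈ L, x ≤ c) (j : Fin n) : pad n L j ≤ c := by
  unfold pad
  by_cases hj : (j : ℕ) < L.length
  · rw [List.getD_eq_getElem _ _ hj]
    exact h _ (List.getElem_mem _)
  · rw [List.getD_eq_default _ _ (not_lt.1 hj)]
    exact Nat.zero_le _

noncomputable def E1 (a b : ℕ) :
    {p : List ℕ × List ℕ // PartList p.1 ∧ PartList p.2 ∧
      p.1.length ≤ a ∧ p.2.length ≤ b} ≃ SrcV a b where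
  toFun p := ⟨(pad a p.val.1, pad b p.val.2),
    pad_antitone p.prop.1.1 p.prop.2.2.1, pad_antitone p.prop.2.1.1 p.prop.2.2.2⟩
  invFun s := ⟨(unpad s.val.1, unpad s.val.2),
    ⟨(unpad_partlist s.prop.1).1, (unpad_partlist s.prop.1).2⟩,
    ⟨(unpad_partlist s.prop.2).1, (unpad_partlist s.prop.2).2⟩,
    unpad_length _, unpad_length _⟩
  left_inv p := Subtype.ext (Prod.ext_iff.mpr
    ⟨unpad_pad p.prop.1.2 p.prop.2.2.1, unpad_pad p.prop.2.1.2 p.prop.2.2.2⟩)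
  right_inv s := Subtype.ext (Prod.ext_iff.mpr
    ⟨pad_unpad s.prop.1, pad_unpad s.prop.2⟩)

noncomputable def E3 (a b : ℕ) :
    TgtV a b ≃ {p : List ℕ × List ℕ // PartList p.1 ∧ PartList p.2 ∧
      p.1.length ≤ a + b ∧ p.2.length ≤ b ∧ ∀ x ∈ p.2, x ≤ a} where
  toFun t := ⟨(unpad t.val.1, unpad t.val.2),
    ⟨(unpad_partlist t.prop.1).1, (unpad_partlist t.prop.1).2⟩,
    ⟨(unpad_partlist t.prop.2.1).1, (unpad_partlist t.prop.2.1).2⟩,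
    unpad_length _, unpad_length _,
    fun x hx => by
      obtain ⟨j, rfl⟩ := unpad_mem hx
      exact t.prop.2.2 j⟩
  invFun p := ⟨(pad (a + b) p.val.1, pad b p.val.2),
    pad_antitone p.prop.1.1 p.prop.2.2.1, pad_antitone p.prop.2.1.1 p.prop.2.2.2.1,
    fun j => pad_le p.prop.2.2.2.2 j⟩
  left_inv t := Subtype.ext (Prod.ext_iff.mpr
    ⟨pad_unpad t.prop.1, pad_unpad t.prop.2.1⟩)
  right_inv p := Subtype.ext (Prod.ext_iff.mpr
    ⟨unpad_pad p.prop.1.2 p.prop.2.2.1, unpad_pad p.prop.2.1.2 p.prop.2.2.2.1⟩)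

end S2

/-- There is a weight-preserving bijection from pairs (partition with at most `a` parts,
partition with at most `b` parts) to pairs (partition with at most `a+b` parts, partition
fitting in a `b × a` box). -/
theorem stmt2 (a b : ℕ) :
    ∃ F : {p : List ℕ × List ℕ // PartList p.1 ∧ PartList p.2 ∧
            p.1.length ≤ a ∧ p.2.length ≤ b} ≃
          {p : List ℕ × List ℕ // PartList p.1 ∧ PartList p.2 ∧
            p.1.length ≤ a + b ∧ p.2.length ≤ b ∧ ∀ x ∈ p.2, x ≤ a},
      ∀ p, p.val.1.sum + p.val.2.sum = (F p).val.1.sum + (F p).val.2.sum := by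
  refine ⟨(S2.E1 a b).trans ((S2.coreEquiv a b).trans (S2.E3 a b)), ?_⟩
  rintro ⟨⟨L1, L2⟩, hp⟩
  show L1.sum + L2.sum =
    (S2.unpad ((S2.coreEquiv a b) ((S2.E1 a b) ⟨(L1, L2), hp⟩)).val.1).sum +
    (S2.unpad ((S2.coreEquiv a b) ((S2.E1 a b) ⟨(L1, L2), hp⟩)).val.2).sum
  rw [S2.sum_unpad, S2.sum_unpad]
  have hcore := S2.coreEquiv_sum a b ((S2.E1 a b) ⟨(L1, L2), hp⟩)
  have hs1 : (∑ i, ((S2.E1 a b) ⟨(L1, L2), hp⟩).val.1 i) = L1.sum := by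
    show (∑ i, S2.pad a L1 i) = L1.sum
    exact S2.sum_pad a L1 hp.2.2.1
  have hs2 : (∑ j, ((S2.E1 a b) ⟨(L1, L2), hp⟩).val.2 j) = L2.sum := by
    show (∑ j, S2.pad b L2 j) = L2.sum
    exact S2.sum_pad b L2 hp.2.2.2
  omega
end

section
/- For integers h and k ≥ 1, the generating function for the number of partitions of n having an h-fixed hook arising from a part of size k (i.e., some s with h_{s,1}(λ) = s + h and λ_s = k) is ∑_{s=k-h}^∞ q^{(k+1)(s-1)+h+1} [s+h-1 choose k-1]_q / (q)_{s-1}. -/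
open PowerSeries in
/-- The finite q-Pochhammer symbol `(q)_a = ∏_{k=1}^a (1 - q^k)` as a power series in `q = X`. -/
noncomputable def poch (a : ℕ) : PowerSeries ℚ :=
  ∏ k ∈ Finset.range a, (1 - (X : PowerSeries ℚ) ^ (k + 1))

/-- The Gaussian binomial coefficient `[A choose B]_q = (q)_A / ((q)_B (q)_{A-B})`. -/
noncomputable def gauss (A B : ℕ) : PowerSeries ℚ := poch A * (poch B)⁻¹ * (poch (A - B))⁻¹

open PowerSeries in
/-- The infinite product `(q^m; q)_∞ = ∏_{k≥0} (1 - q^{m+k})`, defined coefficientwise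
(the coefficient of `q^n` stabilizes in the finite partial products). -/
noncomputable def pochShiftInf (m : ℕ) : PowerSeries ℚ :=
  PowerSeries.mk fun n =>
    coeff n (∏ k ∈ Finset.range (n + 1), (1 - (X : PowerSeries ℚ) ^ (m + k)))

open PowerSeries

/-- Lists with bounded length and bounded entries form a finite set. -/
lemma finite_lists (a n : ℕ) : {L : List ℕ | L.length ≤ a ∧ ∀ x ∈ L, x ≤ n}.Finite := by
  have h1 : {l : List (Fin (n+1)) | l.length ≤ a}.Finite := List.finite_length_le _ a
  have h2 : {L : List ℕ | L.length ≤ a ∧ ∀ x ∈ L, x ≤ n} ⊆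
      (fun l : List (Fin (n+1)) => l.map (Fin.val)) '' {l | l.length ≤ a} := by
    rintro L ⟨hlen, hbd⟩
    refine ⟨L.pmap (fun x hx => (⟨x, hx⟩ : Fin (n+1))) (fun x hx => Nat.lt_succ_of_le (hbd x hx)), ?_, ?_⟩
    · simpa using hlen
    · simp [List.map_pmap]
  exact (h1.image _).subset h2

/-- Finiteness of subtypes of lists with controlled length and entries. -/
lemma finite_subtype {p : List ℕ → Prop} {a n : ℕ}
    (hp : ∀ L, p L → L.length ≤ a ∧ ∀ x ∈ L, x ≤ n) : Finite {L : List ℕ // p L} := by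
  have : {L : List ℕ | p L} ⊆ {L : List ℕ | L.length ≤ a ∧ ∀ x ∈ L, x ≤ n} := fun L hL => hp L hL
  exact ((finite_lists a n).subset this).to_subtype

/-- number of weakly increasing lists of length `a` with sum `n`. -/
noncomputable def Mcard (a n : ℕ) : ℕ :=
  Nat.card {L : List ℕ // L.Pairwise (· ≤ ·) ∧ L.length = a ∧ L.sum = n}

/-- number of weakly increasing lists of length `b`, entries `≤ c`, sum `n`. -/
noncomputable def Ncard (b c n : ℕ) : ℕ :=
  Nat.card {L : List ℕ // L.Pairwise (· ≤ ·) ∧ L.length = b ∧ (∀ x ∈ L, x ≤ c) ∧ L.sum = n}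

lemma sum_bound {L : List ℕ} {n : ℕ} (h : L.sum = n) : ∀ x ∈ L, x ≤ n :=
  fun x hx => h ▸ List.single_le_sum (fun y _ => Nat.zero_le y) x hx

instance Mfin (a n : ℕ) : Finite {L : List ℕ // L.Pairwise (· ≤ ·) ∧ L.length = a ∧ L.sum = n} :=
  finite_subtype (fun L hL => ⟨hL.2.1.le, sum_bound hL.2.2⟩)

instance Nfin (b c n : ℕ) :
    Finite {L : List ℕ // L.Pairwise (· ≤ ·) ∧ L.length = b ∧ (∀ x ∈ L, x ≤ c) ∧ L.sum = n} :=
  finite_subtype (fun L hL => ⟨hL.2.1.le, sum_bound hL.2.2.2⟩)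

/-- Nat.card of sigma types over a fintype. -/
lemma card_sigma' {ι : Type*} [Fintype ι] (β : ι → Type*) [∀ i, Finite (β i)] :
    Nat.card (Σ i, β i) = ∑ i, Nat.card (β i) := by
  have : ∀ i, Fintype (β i) := fun i => Fintype.ofFinite _
  simp [Nat.card_eq_fintype_card, Fintype.card_sigma]

/-- Splitting a card by a predicate. -/
lemma card_split {α : Type*} (p q : α → Prop) [Finite {x // p x}] :
    Nat.card {x // p x} = Nat.card {x // p x ∧ q x} + Nat.card {x // p x ∧ ¬ q x} := by
  classical
  have e : {x // p x ∧ q x} ⊕ {x // p x ∧ ¬ q x} ≃ {x // p x} :=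
    ((Equiv.subtypeSubtypeEquivSubtypeInter p q).symm.sumCongr
      (Equiv.subtypeSubtypeEquivSubtypeInter p (fun x => ¬ q x)).symm).trans
      (Equiv.sumCompl (fun x : {a // p a} => q x.1))
  have : Finite {x // p x ∧ q x} := Finite.of_injective (fun y => (⟨y.1, y.2.1⟩ : {x // p x}))
    (fun y z hyz => Subtype.ext (by simpa using congrArg Subtype.val hyz))
  have : Finite {x // p x ∧ ¬ q x} := Finite.of_injective (fun y => (⟨y.1, y.2.1⟩ : {x // p x}))
    (fun y z hyz => Subtype.ext (by simpa using congrArg Subtype.val hyz))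
  rw [← Nat.card_sum, Nat.card_congr e]

lemma poch_succ (a : ℕ) : poch (a+1) = poch a * (1 - X^(a+1)) := by
  rw [poch, Finset.prod_range_succ]; rfl

lemma constantCoeff_poch (a : ℕ) : constantCoeff (poch a) = 1 := by
  rw [poch, map_prod]
  refine Finset.prod_eq_one fun k _ => ?_
  simp [constantCoeff_X]

lemma poch_ne (a : ℕ) : constantCoeff (poch a) ≠ 0 := by
  rw [constantCoeff_poch]; exact one_ne_zero

lemma poch_inv_mul (a : ℕ) : (poch a)⁻¹ * poch a = 1 := PowerSeries.inv_mul_cancel _ (poch_ne a)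

lemma Mcard0 (n : ℕ) : Nat.card {L : List ℕ // L.Pairwise (· ≤ ·) ∧ L.length = 0 ∧ L.sum = n}
    = if n = 0 then 1 else 0 := by
  split_ifs with h
  · subst h
    haveI : Unique {L : List ℕ // L.Pairwise (· ≤ ·) ∧ L.length = 0 ∧ L.sum = 0} :=
      ⟨⟨⟨[], by simp⟩⟩, fun L => Subtype.ext (by
        have := L.2.2.1; simpa using List.eq_nil_of_length_eq_zero this)⟩
    exact Nat.card_unique
  · haveI : IsEmpty {L : List ℕ // L.Pairwise (· ≤ ·) ∧ L.length = 0 ∧ L.sum = n} := by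
      refine ⟨fun L => h ?_⟩
      have h1 := List.eq_nil_of_length_eq_zero L.2.2.1
      have h2 := L.2.2.2
      rw [h1] at h2; simpa using h2.symm
    exact Nat.card_of_isEmpty

section Helpers

lemma sum_map_succ (T : List ℕ) : (T.map (fun x => x + 1)).sum = T.sum + T.length := by
  induction T with
  | nil => simp
  | cons x T ih => simp [ih]; omega

lemma map_sub_one_add_one {L : List ℕ} (h : ∀ x ∈ L, x ≠ 0) :
    (L.map (fun x => x - 1)).map (fun x => x + 1) = L := by
  rw [List.map_map]
  conv_rhs => rw [← List.map_id L]
  exact List.map_congr_left (fun x hx => by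
    simp only [Function.comp_apply, id_eq]
    have := h x hx; omega)

lemma length_le_sum_list {L : List ℕ} (h : ∀ x ∈ L, x ≠ 0) : L.length ≤ L.sum := by
  induction L with
  | nil => simp
  | cons x T ih =>
    have hx := h x (List.mem_cons_self)
    have := ih (fun y hy => h y (List.mem_cons_of_mem x hy))
    simp only [List.length_cons, List.sum_cons]
    omega

lemma sorted_head_zero {L : List ℕ} (hs : L.Pairwise (· ≤ ·)) (h0 : 0 ∈ L) : L = 0 :: L.tail := by
  cases L with
  | nil => simp at h0
  | cons x T =>
    rw [List.pairwise_cons] at hs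
    rcases List.mem_cons.1 h0 with h | h
    · rw [← h]; rfl
    · have := hs.1 0 h; interval_cases x; rfl

end Helpers

section Equivs

/-- Strip the leading zero. -/
def eqTailN (a c n : ℕ) :
    {L : List ℕ // (L.Pairwise (· ≤ ·) ∧ L.length = a+1 ∧ (∀ x ∈ L, x ≤ c) ∧ L.sum = n) ∧ 0 ∈ L} ≃
    {L : List ℕ // L.Pairwise (· ≤ ·) ∧ L.length = a ∧ (∀ x ∈ L, x ≤ c) ∧ L.sum = n} where
  toFun L := ⟨L.1.tail, by
    obtain ⟨⟨hs, hl, hb, hsum⟩, h0⟩ := L.2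
    have hL := sorted_head_zero hs h0
    refine ⟨hs.tail, ?_, fun x hx => hb x (by rw [hL]; exact List.mem_cons_of_mem _ hx), ?_⟩
    · rw [hL] at hl; simpa using hl
    · rw [hL] at hsum; simpa using hsum⟩
  invFun T := ⟨0 :: T.1, by
    obtain ⟨hs, hl, hb, hsum⟩ := T.2
    refine ⟨⟨List.pairwise_cons.2 ⟨fun b _ => Nat.zero_le b, hs⟩, by simp [hl], ?_, by simp [hsum]⟩,
      List.mem_cons_self⟩
    intro x hx
    rcases List.mem_cons.1 hx with h | h
    · omega
    · exact hb x h⟩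
  left_inv L := Subtype.ext (sorted_head_zero L.2.1.1 L.2.2).symm
  right_inv T := Subtype.ext rfl

/-- Subtract one from every entry (no zero entries). -/
def eqSubN (a c n : ℕ) (hn : a+1 ≤ n) :
    {L : List ℕ // (L.Pairwise (· ≤ ·) ∧ L.length = a+1 ∧ (∀ x ∈ L, x ≤ c+1) ∧ L.sum = n) ∧ ¬ 0 ∈ L} ≃
    {L : List ℕ // L.Pairwise (· ≤ ·) ∧ L.length = a+1 ∧ (∀ x ∈ L, x ≤ c) ∧ L.sum = n - (a+1)} where
  toFun L := ⟨L.1.map (fun x => x - 1), by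
    obtain ⟨⟨hs, hl, hb, hsum⟩, h0⟩ := L.2
    have h0' : ∀ x ∈ L.1, x ≠ 0 := fun x hx hx0 => h0 (hx0 ▸ hx)
    have key := sum_map_succ (L.1.map (fun x => x - 1))
    rw [map_sub_one_add_one h0'] at key
    refine ⟨List.Pairwise.map _ (fun a b h => Nat.sub_le_sub_right h 1) hs, by simp [hl], ?_, ?_⟩
    · intro x hx
      rcases List.mem_map.1 hx with ⟨y, hy, rfl⟩
      have := hb y hy; omega
    · simp only [List.length_map, hl] at key
      omega⟩
  invFun T := ⟨T.1.map (fun x => x + 1), by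
    obtain ⟨hs, hl, hb, hsum⟩ := T.2
    refine ⟨⟨List.Pairwise.map _ (fun a b h => Nat.add_le_add_right h 1) hs, by simp [hl], ?_, ?_⟩, ?_⟩
    · intro x hx
      rcases List.mem_map.1 hx with ⟨y, hy, rfl⟩
      have := hb y hy; omega
    · rw [sum_map_succ, hsum, hl]; omega
    · intro h0
      rcases List.mem_map.1 h0 with ⟨y, _, hy⟩
      omega⟩
  left_inv L := Subtype.ext (map_sub_one_add_one (fun x hx hx0 => L.2.2 (hx0 ▸ hx)))
  right_inv T := Subtype.ext (by
    show (T.1.map (fun x => x + 1)).map (fun x => x - 1) = T.1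
    rw [List.map_map]
    conv_rhs => rw [← List.map_id T.1]
    exact List.map_congr_left (fun x hx => by simp))

/-- Strip the leading zero, unbounded version. -/
def eqTailM (a n : ℕ) :
    {L : List ℕ // (L.Pairwise (· ≤ ·) ∧ L.length = a+1 ∧ L.sum = n) ∧ 0 ∈ L} ≃
    {L : List ℕ // L.Pairwise (· ≤ ·) ∧ L.length = a ∧ L.sum = n} where
  toFun L := ⟨L.1.tail, by
    obtain ⟨⟨hs, hl, hsum⟩, h0⟩ := L.2
    have hL := sorted_head_zero hs h0
    refine ⟨hs.tail, ?_, ?_⟩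
    · rw [hL] at hl; simpa using hl
    · rw [hL] at hsum; simpa using hsum⟩
  invFun T := ⟨0 :: T.1, by
    obtain ⟨hs, hl, hsum⟩ := T.2
    exact ⟨⟨List.pairwise_cons.2 ⟨fun b _ => Nat.zero_le b, hs⟩, by simp [hl], by simp [hsum]⟩,
      List.mem_cons_self⟩⟩
  left_inv L := Subtype.ext (sorted_head_zero L.2.1.1 L.2.2).symm
  right_inv T := Subtype.ext rfl

/-- Subtract one from every entry, unbounded version. -/
def eqSubM (a n : ℕ) (hn : a+1 ≤ n) :
    {L : List ℕ // (L.Pairwise (· ≤ ·) ∧ L.length = a+1 ∧ L.sum = n) ∧ ¬ 0 ∈ L} ≃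
    {L : List ℕ // L.Pairwise (· ≤ ·) ∧ L.length = a+1 ∧ L.sum = n - (a+1)} where
  toFun L := ⟨L.1.map (fun x => x - 1), by
    obtain ⟨⟨hs, hl, hsum⟩, h0⟩ := L.2
    have h0' : ∀ x ∈ L.1, x ≠ 0 := fun x hx hx0 => h0 (hx0 ▸ hx)
    have key := sum_map_succ (L.1.map (fun x => x - 1))
    rw [map_sub_one_add_one h0'] at key
    refine ⟨List.Pairwise.map _ (fun a b h => Nat.sub_le_sub_right h 1) hs, by simp [hl], ?_⟩
    simp only [List.length_map, hl] at key
    omega⟩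
  invFun T := ⟨T.1.map (fun x => x + 1), by
    obtain ⟨hs, hl, hsum⟩ := T.2
    refine ⟨⟨List.Pairwise.map _ (fun a b h => Nat.add_le_add_right h 1) hs, by simp [hl], ?_⟩, ?_⟩
    · rw [sum_map_succ, hsum, hl]; omega
    · intro h0
      rcases List.mem_map.1 h0 with ⟨y, _, hy⟩
      omega⟩
  left_inv L := Subtype.ext (map_sub_one_add_one (fun x hx hx0 => L.2.2 (hx0 ▸ hx)))
  right_inv T := Subtype.ext (by
    show (T.1.map (fun x => x + 1)).map (fun x => x - 1) = T.1
    rw [List.map_map]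
    conv_rhs => rw [← List.map_id T.1]
    exact List.map_congr_left (fun x hx => by simp))

end Equivs

section Recurrences

lemma Mcard_zero (n : ℕ) : Mcard 0 n = if n = 0 then 1 else 0 := Mcard0 n

lemma Mcard_succ (a n : ℕ) :
    Mcard (a+1) n = Mcard a n + (if a+1 ≤ n then Mcard (a+1) (n-(a+1)) else 0) := by
  have h := card_split (fun L : List ℕ => L.Pairwise (· ≤ ·) ∧ L.length = a+1 ∧ L.sum = n)
    (fun L => 0 ∈ L)
  simp only [Mcard]
  rw [h]
  congr 1
  · exact Nat.card_congr (eqTailM a n)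
  · by_cases hn : a+1 ≤ n
    · rw [if_pos hn]
      exact Nat.card_congr (eqSubM a n hn)
    · rw [if_neg hn]
      haveI : IsEmpty {L : List ℕ //
          (L.Pairwise (· ≤ ·) ∧ L.length = a+1 ∧ L.sum = n) ∧ ¬ 0 ∈ L} := by
        refine ⟨fun L => ?_⟩
        obtain ⟨⟨hs, hl, hsum⟩, h0⟩ := L.2
        have := length_le_sum_list (L := L.1) (fun x hx hx0 => h0 (hx0 ▸ hx))
        omega
      exact Nat.card_of_isEmpty

lemma Ncard_zero_left (c n : ℕ) : Ncard 0 c n = if n = 0 then 1 else 0 := by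
  simp only [Ncard]
  split_ifs with h
  · subst h
    haveI : Unique {L : List ℕ //
        L.Pairwise (· ≤ ·) ∧ L.length = 0 ∧ (∀ x ∈ L, x ≤ c) ∧ L.sum = 0} :=
      ⟨⟨⟨[], by simp⟩⟩, fun L => Subtype.ext (by
        simpa using List.eq_nil_of_length_eq_zero L.2.2.1)⟩
    exact Nat.card_unique
  · haveI : IsEmpty {L : List ℕ //
        L.Pairwise (· ≤ ·) ∧ L.length = 0 ∧ (∀ x ∈ L, x ≤ c) ∧ L.sum = n} := by
      refine ⟨fun L => h ?_⟩
      have h1 := List.eq_nil_of_length_eq_zero L.2.2.1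
      have h2 := L.2.2.2.2
      rw [h1] at h2; simpa using h2.symm
    exact Nat.card_of_isEmpty

lemma Ncard_zero_right (b n : ℕ) : Ncard b 0 n = if n = 0 then 1 else 0 := by
  simp only [Ncard]
  split_ifs with h
  · subst h
    haveI : Unique {L : List ℕ //
        L.Pairwise (· ≤ ·) ∧ L.length = b ∧ (∀ x ∈ L, x ≤ 0) ∧ L.sum = 0} := by
      refine ⟨⟨⟨List.replicate b 0, ?_, by simp, by simp, by simp⟩⟩, fun L => Subtype.ext ?_⟩
      · exact List.pairwise_replicate.2 (Or.inr (le_refl 0))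
      · exact List.eq_replicate_iff.2 ⟨L.2.2.1, fun x hx => Nat.le_zero.1 (L.2.2.2.1 x hx)⟩
    exact Nat.card_unique
  · haveI : IsEmpty {L : List ℕ //
        L.Pairwise (· ≤ ·) ∧ L.length = b ∧ (∀ x ∈ L, x ≤ 0) ∧ L.sum = n} := by
      refine ⟨fun L => h ?_⟩
      have : L.1.sum = 0 := List.sum_eq_zero (fun x hx => Nat.le_zero.1 (L.2.2.2.1 x hx))
      have h2 := L.2.2.2.2
      omega
    exact Nat.card_of_isEmpty

lemma Ncard_succ (b c n : ℕ) :
    Ncard (b+1) (c+1) n = Ncard b (c+1) n + (if b+1 ≤ n then Ncard (b+1) c (n-(b+1)) else 0) := by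
  have h := card_split
    (fun L : List ℕ => L.Pairwise (· ≤ ·) ∧ L.length = b+1 ∧ (∀ x ∈ L, x ≤ c+1) ∧ L.sum = n)
    (fun L => 0 ∈ L)
  simp only [Ncard]
  rw [h]
  congr 1
  · exact Nat.card_congr (eqTailN b (c+1) n)
  · by_cases hn : b+1 ≤ n
    · rw [if_pos hn]
      exact Nat.card_congr (eqSubN b c n hn)
    · rw [if_neg hn]
      haveI : IsEmpty {L : List ℕ //
          (L.Pairwise (· ≤ ·) ∧ L.length = b+1 ∧ (∀ x ∈ L, x ≤ c+1) ∧ L.sum = n) ∧ ¬ 0 ∈ L} := by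
        refine ⟨fun L => ?_⟩
        obtain ⟨⟨hs, hl, hb', hsum⟩, h0⟩ := L.2
        have := length_le_sum_list (L := L.1) (fun x hx hx0 => h0 (hx0 ▸ hx))
        omega
      exact Nat.card_of_isEmpty

end Recurrences

section GF

lemma mk_if_eq_one : PowerSeries.mk (fun n => ((if n = 0 then 1 else 0 : ℕ) : ℚ)) = 1 := by
  ext n
  rw [coeff_mk, PowerSeries.coeff_one]
  split_ifs <;> simp

lemma M_gf (a : ℕ) : PowerSeries.mk (fun n => (Mcard a n : ℚ)) * poch a = 1 := by
  induction a with
  | zero =>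
    have h0 : poch 0 = 1 := by simp [poch]
    rw [h0, mul_one]
    simp only [Mcard_zero]
    exact mk_if_eq_one
  | succ a ih =>
    have key : (1 - X^(a+1)) * PowerSeries.mk (fun n => (Mcard (a+1) n : ℚ)) =
        PowerSeries.mk (fun n => (Mcard a n : ℚ)) := by
      ext n
      rw [sub_mul, one_mul, map_sub, coeff_X_pow_mul']
      simp only [coeff_mk]
      rw [Mcard_succ a n]
      push_cast
      split_ifs with h <;> ring
    calc PowerSeries.mk (fun n => (Mcard (a+1) n : ℚ)) * poch (a+1)
        = ((1 - X^(a+1)) * PowerSeries.mk (fun n => (Mcard (a+1) n : ℚ))) * poch a := by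
          rw [poch_succ]; ring
      _ = 1 := by rw [key, ih]

lemma N_gf (b c : ℕ) :
    PowerSeries.mk (fun n => (Ncard b c n : ℚ)) * (poch b * poch c) = poch (b+c) := by
  induction b generalizing c with
  | zero =>
    have h0 : poch 0 = 1 := by simp [poch]
    simp only [Ncard_zero_left, h0, one_mul]
    rw [mk_if_eq_one, one_mul, Nat.zero_add]
  | succ b ihb =>
    induction c with
    | zero =>
      have h0 : poch 0 = 1 := by simp [poch]
      simp only [Ncard_zero_right, h0, mul_one]
      rw [mk_if_eq_one, one_mul]
    | succ c ihc =>
      have R : PowerSeries.mk (fun n => (Ncard (b+1) (c+1) n : ℚ)) =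
          PowerSeries.mk (fun n => (Ncard b (c+1) n : ℚ)) +
          X^(b+1) * PowerSeries.mk (fun n => (Ncard (b+1) c n : ℚ)) := by
        ext n
        rw [map_add, coeff_X_pow_mul']
        simp only [coeff_mk]
        rw [Ncard_succ b c n]
        push_cast
        split_ifs with h <;> ring
      have E1 := ihb (c+1)
      have E2 := ihc
      rw [show b+1+c = b+(c+1) from by omega] at E2
      rw [show b+1+(c+1) = (b+(c+1))+1 from by omega, R, poch_succ (b+(c+1)), poch_succ b, poch_succ c]
      rw [poch_succ c] at E1
      rw [poch_succ b] at E2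
      linear_combination (1 - (X : PowerSeries ℚ)^(b+1)) * E1 +
        (X : PowerSeries ℚ)^(b+1) * (1 - (X : PowerSeries ℚ)^(c+1)) * E2

lemma pochinv_eq (a : ℕ) : (poch a)⁻¹ = PowerSeries.mk (fun n => (Mcard a n : ℚ)) := by
  calc (poch a)⁻¹ = (PowerSeries.mk (fun n => (Mcard a n : ℚ)) * poch a) * (poch a)⁻¹ := by
        rw [M_gf, one_mul]
    _ = PowerSeries.mk (fun n => (Mcard a n : ℚ)) * (poch a * (poch a)⁻¹) := by ring
    _ = _ := by rw [PowerSeries.mul_inv_cancel _ (poch_ne a), mul_one]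

lemma gauss_eq (b c : ℕ) :
    gauss (b+c) b = PowerSeries.mk (fun n => (Ncard b c n : ℚ)) := by
  rw [gauss, show (b+c)-b = c from by omega, ← N_gf b c]
  have hb := PowerSeries.mul_inv_cancel _ (poch_ne b)
  have hc := PowerSeries.mul_inv_cancel _ (poch_ne c)
  linear_combination (PowerSeries.mk (fun n => (Ncard b c n : ℚ)) * poch c * (poch c)⁻¹) * hb +
    (PowerSeries.mk (fun n => (Ncard b c n : ℚ))) * hc

end GF

section Pairs

/-- Pairs of an unbounded increasing list of length `a` and a bounded one. -/
def PairCond (a b c m : ℕ) (p : List ℕ × List ℕ) : Prop :=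
  p.1.Pairwise (· ≤ ·) ∧ p.1.length = a ∧ p.2.Pairwise (· ≤ ·) ∧ p.2.length = b ∧
    (∀ x ∈ p.2, x ≤ c) ∧ p.1.sum + p.2.sum = m

def pairEquiv (a b c m : ℕ) : {p : List ℕ × List ℕ // PairCond a b c m p} ≃
    Σ ij : (Finset.HasAntidiagonal.antidiagonal m : Finset (ℕ × ℕ)),
      ({L : List ℕ // L.Pairwise (· ≤ ·) ∧ L.length = a ∧ L.sum = ij.1.1} ×
       {L : List ℕ // L.Pairwise (· ≤ ·) ∧ L.length = b ∧ (∀ x ∈ L, x ≤ c) ∧ L.sum = ij.1.2}) where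
  toFun p := ⟨⟨(p.1.1.sum, p.1.2.sum), by
      rw [Finset.HasAntidiagonal.mem_antidiagonal]; exact p.2.2.2.2.2.2⟩,
    (⟨p.1.1, p.2.1, p.2.2.1, rfl⟩, ⟨p.1.2, p.2.2.2.1, p.2.2.2.2.1, p.2.2.2.2.2.1, rfl⟩)⟩
  invFun x := ⟨(x.2.1.1, x.2.2.1), x.2.1.2.1, x.2.1.2.2.1, x.2.2.2.1, x.2.2.2.2.1, x.2.2.2.2.2.1, by
    have h1 : (x.2.1.1 : List ℕ).sum = (x.1.1 : ℕ × ℕ).1 := x.2.1.2.2.2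
    have h2 : (x.2.2.1 : List ℕ).sum = (x.1.1 : ℕ × ℕ).2 := x.2.2.2.2.2.2
    have h3 : (x.1.1 : ℕ × ℕ).1 + (x.1.1 : ℕ × ℕ).2 = m := Finset.HasAntidiagonal.mem_antidiagonal.1 x.1.2
    show (x.2.1.1 : List ℕ).sum + (x.2.2.1 : List ℕ).sum = m
    omega⟩
  left_inv p := rfl
  right_inv x := by
    rcases x with ⟨⟨⟨i, j⟩, hij⟩, ⟨⟨μ, hμ1, hμ2, hμ3⟩, ⟨ν, hν1, hν2, hν3, hν4⟩⟩⟩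
    obtain rfl : μ.sum = i := hμ3
    obtain rfl : ν.sum = j := hν4
    rfl

lemma pairs_card (a b c m : ℕ) :
    (Nat.card {p : List ℕ × List ℕ // PairCond a b c m p} : ℚ) =
      coeff m ((poch a)⁻¹ * gauss (b+c) b) := by
  rw [pochinv_eq, gauss_eq, PowerSeries.coeff_mul]
  simp only [coeff_mk]
  have key : Nat.card {p : List ℕ × List ℕ // PairCond a b c m p} =
      ∑ ij ∈ Finset.HasAntidiagonal.antidiagonal m, Mcard a ij.1 * Ncard b c ij.2 := by
    rw [Nat.card_congr (pairEquiv a b c m), card_sigma']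
    rw [← Finset.sum_coe_sort (Finset.HasAntidiagonal.antidiagonal m)
      (fun ij => Mcard a ij.1 * Ncard b c ij.2)]
    exact Finset.sum_congr rfl (fun ij _ => Nat.card_prod _ _)
  rw [key]
  push_cast
  rfl

end Pairs

section Decompose

lemma mul_length_le_sum {T : List ℕ} {c : ℕ} (h : ∀ x ∈ T, c ≤ x) : c * T.length ≤ T.sum := by
  induction T with
  | nil => simp
  | cons x T ih =>
    have h1 := h x (List.mem_cons_self)
    have h2 := ih (fun y hy => h y (List.mem_cons_of_mem x hy))
    simp only [List.length_cons, List.sum_cons, Nat.mul_succ]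
    omega

lemma sum_map_add_c (T : List ℕ) (c : ℕ) :
    (T.map (fun x => x + c)).sum = T.sum + c * T.length := by
  induction T with
  | nil => simp
  | cons x T ih =>
    simp only [List.map_cons, List.sum_cons, List.length_cons, ih, Nat.mul_succ]
    omega

lemma sum_map_sub_c {T : List ℕ} {c : ℕ} (h : ∀ x ∈ T, c ≤ x) :
    (T.map (fun x => x - c)).sum = T.sum - c * T.length := by
  induction T with
  | nil => simp
  | cons x T ih =>
    have h1 := h x (List.mem_cons_self)
    have h2 := mul_length_le_sum (fun y hy => h y (List.mem_cons_of_mem x hy))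
    have h3 := ih (fun y hy => h y (List.mem_cons_of_mem x hy))
    simp only [List.map_cons, List.sum_cons, List.length_cons, h3, Nat.mul_succ]
    omega

lemma decompose {k d t n : ℕ} {L : List ℕ}
    (hs : L.Pairwise (· ≥ ·)) (hpos : ∀ x ∈ L, 0 < x) (hsum : L.sum = n)
    (hlen : L.length = d + 2*t + 1) (hl : d + t < L.length) (hget : L[d+t] = k) :
    (∀ x ∈ L.take (d+t), k ≤ x) ∧ (∀ x ∈ L.drop (d+t+1), 1 ≤ x ∧ x ≤ k) ∧
    (L.take (d+t)).length = d+t ∧ (L.drop (d+t+1)).length = t ∧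
    (L.take (d+t)).sum + (k + (L.drop (d+t+1)).sum) = n ∧
    L = L.take (d+t) ++ k :: L.drop (d+t+1) ∧ k*(d+t+1) + t ≤ n := by
  have hpg := List.pairwise_iff_getElem.1 hs
  have htk : ∀ x ∈ L.take (d+t), k ≤ x := by
    intro x hx
    rcases List.mem_iff_getElem.1 hx with ⟨i, hi, rfl⟩
    rw [List.getElem_take]
    have hi' : i < d + t := by rw [List.length_take] at hi; omega
    have := hpg i (d+t) (by omega) hl hi'
    omega
  have htd : ∀ x ∈ L.drop (d+t+1), 1 ≤ x ∧ x ≤ k := by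
    intro x hx
    rcases List.mem_iff_getElem.1 hx with ⟨i, hi, rfl⟩
    rw [List.getElem_drop]
    constructor
    · exact hpos _ (List.getElem_mem _)
    · have hi2 : d+t+1+i < L.length := by rw [List.length_drop] at hi; omega
      have := hpg (d+t) (d+t+1+i) hl hi2 (by omega)
      omega
  have hlt : (L.take (d+t)).length = d+t := by rw [List.length_take]; omega
  have hld : (L.drop (d+t+1)).length = t := by rw [List.length_drop]; omega
  have hdec : L = L.take (d+t) ++ k :: L.drop (d+t+1) := by
    conv_lhs => rw [← List.take_append_drop (d+t) L]
    rw [List.drop_eq_getElem_cons hl, hget]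
  have hsplit : (L.take (d+t)).sum + (k + (L.drop (d+t+1)).sum) = n := by
    conv_rhs => rw [← hsum, hdec]
    simp
  have hbound : k*(d+t+1) + t ≤ n := by
    have b1 := mul_length_le_sum htk
    have b2 := mul_length_le_sum (fun x hx => (htd x hx).1)
    rw [hlt] at b1
    rw [hld] at b2
    have : k * (d+t+1) = k * (d+t) + k := by ring
    omega
  exact ⟨htk, htd, hlt, hld, hsplit, hdec, hbound⟩

end Decompose

section Main

lemma gauss_symm (b c : ℕ) : gauss (b + c) b = gauss (c + b) c := by
  rw [gauss, gauss, show (b+c)-b = c from by omega, show (c+b)-c = b from by omega,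
    show c+b = b+c from by omega]
  ring

set_option maxHeartbeats 1000000 in
/-- The main bijection: a partition of `n` with a `k`-part at 0-indexed position `d+t`
and length `d+2t+1` corresponds to a pair of smaller partitions. -/
noncomputable def partEquiv (k d t n : ℕ) (hk : 1 ≤ k) (he : k*(d+t+1)+t ≤ n) :
    {L : List ℕ // PartitionOf n L ∧ (L.length = d + 2*t + 1 ∧
        ∃ hl : d + t < L.length, L.get ⟨d+t, hl⟩ = k)} ≃
    {p : List ℕ × List ℕ // PairCond (d+t) t (k-1) (n - (k*(d+t+1)+t)) p} where
  toFun L := ⟨(((L.1.take (d+t)).map (fun x => x - k)).reverse,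
               ((L.1.drop (d+t+1)).map (fun x => x - 1)).reverse), by
    obtain ⟨⟨⟨hs, hpos⟩, hsum⟩, hlen, hl, hget⟩ := L.2
    rw [List.get_eq_getElem] at hget
    obtain ⟨htk, htd, hlt, hld, hsplit, hdec, hbound⟩ := decompose hs hpos hsum hlen hl hget
    have b1 := mul_length_le_sum htk
    have b2 := mul_length_le_sum (fun x hx => (htd x hx).1)
    rw [hlt] at b1
    rw [hld] at b2
    refine ⟨?_, by simp only [List.length_reverse, List.length_map]; exact hlt,
      ?_, by simp only [List.length_reverse, List.length_map]; exact hld, ?_, ?_⟩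
    · exact List.pairwise_reverse.2 (List.Pairwise.map _
        (fun a b hab => Nat.sub_le_sub_right hab k)
        (List.Pairwise.sublist (List.take_sublist _ _) hs))
    · exact List.pairwise_reverse.2 (List.Pairwise.map _
        (fun a b hab => Nat.sub_le_sub_right hab 1)
        (List.Pairwise.sublist (List.drop_sublist _ _) hs))
    · intro x hx
      rw [List.mem_reverse] at hx
      rcases List.mem_map.1 hx with ⟨y, hy, rfl⟩
      have := (htd y hy).2
      omega
    · show (_ : List ℕ).sum + (_ : List ℕ).sum = _
      rw [List.sum_reverse, List.sum_reverse, sum_map_sub_c htk,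
        sum_map_sub_c (fun x hx => (htd x hx).1), hlt, hld]
      have hr : k*(d+t+1) = k*(d+t) + k := by ring
      omega⟩
  invFun p := ⟨((p.1.1.map (fun x => x + k)).reverse) ++
      k :: ((p.1.2.map (fun x => x + 1)).reverse), by
    obtain ⟨hμs, hμl, hνs, hνl, hνb, hsum⟩ := p.2
    have hUl : ((p.1.1.map (fun x => x + k)).reverse).length = d + t := by simp [hμl]
    have hVl : ((p.1.2.map (fun x => x + 1)).reverse).length = t := by simp [hνl]
    have hU : ∀ x ∈ (p.1.1.map (fun x => x + k)).reverse, k ≤ x := by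
      intro x hx
      rw [List.mem_reverse] at hx
      rcases List.mem_map.1 hx with ⟨y, _, rfl⟩
      omega
    have hV : ∀ x ∈ (p.1.2.map (fun x => x + 1)).reverse, 1 ≤ x ∧ x ≤ k := by
      intro x hx
      rw [List.mem_reverse] at hx
      rcases List.mem_map.1 hx with ⟨y, hy, rfl⟩
      have := hνb y hy
      omega
    have hUs : ((p.1.1.map (fun x => x + k)).reverse).Pairwise (· ≥ ·) :=
      List.pairwise_reverse.2 (List.Pairwise.map _
        (fun a b hab => Nat.add_le_add_right hab k) hμs)
    have hVs : ((p.1.2.map (fun x => x + 1)).reverse).Pairwise (· ≥ ·) :=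
      List.pairwise_reverse.2 (List.Pairwise.map _
        (fun a b hab => Nat.add_le_add_right hab 1) hνs)
    refine ⟨⟨⟨?_, ?_⟩, ?_⟩, ?_, ?_⟩
    · refine List.pairwise_append.2 ⟨hUs, List.pairwise_cons.2 ⟨fun b hb => (hV b hb).2, hVs⟩, ?_⟩
      intro a ha b hb
      rcases List.mem_cons.1 hb with rfl | hb
      · exact hU a ha
      · exact le_trans (hV b hb).2 (hU a ha)
    · intro x hx
      rcases List.mem_append.1 hx with hx | hx
      · have := hU x hx; omega
      · rcases List.mem_cons.1 hx with rfl | hx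
        · omega
        · have := (hV x hx).1; omega
    · rw [List.sum_append, List.sum_cons, List.sum_reverse, List.sum_reverse,
        sum_map_add_c, sum_map_add_c, hμl, hνl]
      have hr : k*(d+t+1) = k*(d+t) + k := by ring
      omega
    · simp only [List.length_append, List.length_cons, hUl, hVl]
      omega
    · have hlen' : d + t < (((p.1.1.map (fun x => x + k)).reverse) ++
          k :: ((p.1.2.map (fun x => x + 1)).reverse)).length := by
        simp only [List.length_append, List.length_cons, hUl, hVl]
        omega
      refine ⟨hlen', ?_⟩
      rw [List.get_eq_getElem, List.getElem_append_right (le_of_eq hUl)]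
      simp only [hUl, Nat.sub_self, List.getElem_cons_zero]⟩
  left_inv L := by
    apply Subtype.ext
    obtain ⟨⟨⟨hs, hpos⟩, hsum⟩, hlen, hl, hget⟩ := L.2
    rw [List.get_eq_getElem] at hget
    obtain ⟨htk, htd, hlt, hld, hsplit, hdec, hbound⟩ := decompose hs hpos hsum hlen hl hget
    show ((((L.1.take (d+t)).map (fun x => x - k)).reverse.map (fun x => x + k)).reverse) ++
      k :: ((((L.1.drop (d+t+1)).map (fun x => x - 1)).reverse.map (fun x => x + 1)).reverse)
      = L.1
    rw [List.map_reverse, List.reverse_reverse, List.map_reverse, List.reverse_reverse,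
      List.map_map, List.map_map]
    have e1 : (L.1.take (d+t)).map ((fun x => x + k) ∘ (fun x => x - k)) = L.1.take (d+t) := by
      conv_rhs => rw [← List.map_id (L.1.take (d+t))]
      exact List.map_congr_left (fun x hx => by
        have := htk x hx
        simp only [Function.comp_apply, id_eq]
        omega)
    have e2 : (L.1.drop (d+t+1)).map ((fun x => x + 1) ∘ (fun x => x - 1)) = L.1.drop (d+t+1) := by
      conv_rhs => rw [← List.map_id (L.1.drop (d+t+1))]
      exact List.map_congr_left (fun x hx => by
        have := (htd x hx).1
        simp only [Function.comp_apply, id_eq]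
        omega)
    rw [e1, e2]
    exact hdec.symm
  right_inv p := by
    apply Subtype.ext
    obtain ⟨hμs, hμl, hνs, hνl, hνb, hsum⟩ := p.2
    have hUl : ((p.1.1.map (fun x => x + k)).reverse).length = d + t := by simp [hμl]
    have htake : ((((p.1.1.map (fun x => x + k)).reverse) ++
        k :: ((p.1.2.map (fun x => x + 1)).reverse)).take (d+t)) =
        (p.1.1.map (fun x => x + k)).reverse := List.take_left' hUl
    have hdrop : ((((p.1.1.map (fun x => x + k)).reverse) ++
        k :: ((p.1.2.map (fun x => x + 1)).reverse)).drop (d+t+1)) =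
        (p.1.2.map (fun x => x + 1)).reverse := by
      rw [show ((p.1.1.map (fun x => x + k)).reverse) ++
          k :: ((p.1.2.map (fun x => x + 1)).reverse) =
          (((p.1.1.map (fun x => x + k)).reverse) ++ [k]) ++
          ((p.1.2.map (fun x => x + 1)).reverse) from by simp]
      exact List.drop_left' (by simp [hμl])
    show (_, _) = p.1
    rw [htake, hdrop]
    have c1 : (((p.1.1.map (fun x => x + k)).reverse).map (fun x => x - k)).reverse = p.1.1 := by
      rw [List.map_reverse, List.reverse_reverse, List.map_map]
      conv_rhs => rw [← List.map_id p.1.1]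
      exact List.map_congr_left (fun x hx => by simp)
    have c2 : (((p.1.2.map (fun x => x + 1)).reverse).map (fun x => x - 1)).reverse = p.1.2 := by
      rw [List.map_reverse, List.reverse_reverse, List.map_map]
      conv_rhs => rw [← List.map_id p.1.2]
      exact List.map_congr_left (fun x hx => by simp)
    rw [c1, c2]

end Main

lemma step3 (k d t n : ℕ) (hk : 1 ≤ k) :
    (Nat.card {L : List ℕ // PartitionOf n L ∧ (L.length = d + 2*t + 1 ∧
        ∃ hl : d + t < L.length, L.get ⟨d+t, hl⟩ = k)} : ℚ) =
      coeff n ((X : PowerSeries ℚ)^(k*(d+t+1)+t) *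
        (gauss ((k-1)+t) (k-1) * (poch (d+t))⁻¹)) := by
  rw [PowerSeries.coeff_X_pow_mul']
  by_cases he : k*(d+t+1)+t ≤ n
  · rw [if_pos he]
    rw [show gauss ((k-1)+t) (k-1) = gauss (t+(k-1)) t from gauss_symm (k-1) t]
    rw [mul_comm (gauss (t+(k-1)) t) ((poch (d+t))⁻¹)]
    rw [← pairs_card (d+t) t (k-1) (n - (k*(d+t+1)+t))]
    exact Nat.cast_inj.2 (Nat.card_congr (partEquiv k d t n hk he))
  · rw [if_neg he]
    haveI : IsEmpty {L : List ℕ // PartitionOf n L ∧ (L.length = d + 2*t + 1 ∧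
        ∃ hl : d + t < L.length, L.get ⟨d+t, hl⟩ = k)} := by
      refine ⟨fun L => he ?_⟩
      obtain ⟨⟨⟨hs, hpos⟩, hsum⟩, hlen, hl, hget⟩ := L.2
      rw [List.get_eq_getElem] at hget
      exact (decompose hs hpos hsum hlen hl hget).2.2.2.2.2.2
    rw [Nat.card_of_isEmpty]
    simp

lemma finite_partition (n : ℕ) (q : List ℕ → Prop) :
    Finite {L : List ℕ // PartitionOf n L ∧ q L} := by
  refine finite_subtype (a := n) (n := n) (fun L hL => ⟨?_, sum_bound hL.1.2⟩)
  have h1 : ∀ x ∈ L, x ≠ 0 := fun x hx => (hL.1.1.2 x hx).ne'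
  have h2 := length_le_sum_list h1
  have h3 := hL.1.2
  omega

set_option maxHeartbeats 1000000 in
noncomputable def hookEquiv (k d n : ℕ) (hk : 1 ≤ k) :
    {L : List ℕ // PartitionOf n L ∧ ∃ t, (L.length = d + 2*t + 1 ∧
        ∃ hl : d + t < L.length, L.get ⟨d+t, hl⟩ = k)} ≃
    Σ t : (Finset.range (n+1) : Finset ℕ),
      {L : List ℕ // PartitionOf n L ∧ (L.length = d + 2*(t:ℕ) + 1 ∧
        ∃ hl : d + (t:ℕ) < L.length, L.get ⟨d+(t:ℕ), hl⟩ = k)} where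
  toFun L := ⟨⟨(L.1.length - (d+1))/2, by
      rw [Finset.mem_range]
      obtain ⟨hP, t, hlen, hl, hget⟩ := L.2
      rw [List.get_eq_getElem] at hget
      have hbound := (decompose hP.1.1 hP.1.2 hP.2 hlen hl hget).2.2.2.2.2.2
      have hkb : 1 * (d+t+1) ≤ k * (d+t+1) := Nat.mul_le_mul_right _ hk
      omega⟩, ⟨L.1, by
      obtain ⟨hP, t, hlen, hl, hget⟩ := L.2
      have ht : (L.1.length - (d+1))/2 = t := by omega
      show PartitionOf n L.1 ∧ (L.1.length = d + 2*((L.1.length - (d+1))/2) + 1 ∧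
        ∃ hl2 : d + ((L.1.length - (d+1))/2) < L.1.length,
          L.1.get ⟨d + ((L.1.length - (d+1))/2), hl2⟩ = k)
      rw [ht]
      exact ⟨hP, hlen, hl, hget⟩⟩⟩
  invFun x := ⟨x.2.1, x.2.2.1, ⟨(x.1 : ℕ), x.2.2.2⟩⟩
  left_inv L := Subtype.ext rfl
  right_inv x := by
    rcases x with ⟨⟨t, ht⟩, ⟨L, hL, hlen, hget⟩⟩
    have h2 : (L.length - (d+1))/2 = t := by
      have : L.length = d + 2*t + 1 := hlen
      omega
    obtain rfl := h2
    rfl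

-- MORE

/-- The generating function for partitions of `n` with an `h`-fixed hook arising from a
part of size `k` is `∑_{s=k-h}^∞ q^{(k+1)(s-1)+h+1} [s+h-1 choose k-1]_q / (q)_{s-1}`
(here the summation index is `s = k - h + t`, `t ≥ 0`). -/

theorem stmt6 (h : ℤ) (k : ℕ) (hk : 1 ≤ k) (hhk : h < k) :
    PowerSeries.mk (fun n =>
        (Nat.card {L : List ℕ // PartitionOf n L ∧ ∃ i, FixedHookPart h k L i} : ℚ)) =
      PowerSeries.mk (fun n => ∑' t : ℕ,
        coeff n ((X : PowerSeries ℚ) ^ (((k + 1 : ℤ) * ((k : ℤ) - h - 1 + t) + h + 1).toNat) *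
          gauss (k - 1 + t) (k - 1) * (poch (((k : ℤ) - 1 - h).toNat + t))⁻¹)) := by
  have hd0 : (0:ℤ) ≤ (k:ℤ) - 1 - h := by omega
  set d : ℕ := ((k:ℤ) - 1 - h).toNat with hddef
  have hd : (k:ℤ) - 1 - h = d := (Int.toNat_of_nonneg hd0).symm
  have hE : ∀ t : ℕ, (((k:ℤ) + 1) * ((k:ℤ) - h - 1 + t) + h + 1).toNat = k*(d+t+1)+t := by
    intro t
    have h1 : ((k:ℤ) + 1) * ((k:ℤ) - h - 1 + t) + h + 1 = ((k*(d+t+1)+t : ℕ) : ℤ) := by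
      push_cast
      linear_combination ((k:ℤ)) * hd
    rw [h1, Int.toNat_natCast]
  ext n
  rw [coeff_mk, coeff_mk]
  have hvanish : ∀ t ∉ Finset.range (n+1),
      coeff n ((X : PowerSeries ℚ) ^ (((k + 1 : ℤ) * ((k : ℤ) - h - 1 + t) + h + 1).toNat) *
        gauss (k - 1 + t) (k - 1) * (poch (d + t))⁻¹) = 0 := by
    intro t ht
    rw [Finset.mem_range, not_lt] at ht
    rw [hE t, mul_assoc, PowerSeries.coeff_X_pow_mul', if_neg (by omega)]
  rw [tsum_eq_sum hvanish]
  have hiff : ∀ L : List ℕ, (∃ i, FixedHookPart h k L i) ↔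
      (∃ t, (L.length = d + 2*t + 1 ∧ ∃ hl : d + t < L.length, L.get ⟨d+t, hl⟩ = k)) := by
    intro L
    constructor
    · rintro ⟨i, hi, hgi, heq⟩
      have hid : d ≤ i ∧ L.length = d + 2*(i-d) + 1 := by omega
      refine ⟨i - d, hid.2, by omega, ?_⟩
      rw [List.get_eq_getElem] at hgi ⊢
      have hix : d + (i - d) = i := by omega
      simp only [hix]
      exact hgi
    · rintro ⟨t, hlen, hl, hget⟩
      exact ⟨d + t, hl, hget, by push_cast; omega⟩
  have hL1 : Nat.card {L : List ℕ // PartitionOf n L ∧ ∃ i, FixedHookPart h k L i} =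
      ∑ t ∈ Finset.range (n+1), Nat.card {L : List ℕ // PartitionOf n L ∧
        (L.length = d + 2*t + 1 ∧ ∃ hl : d + t < L.length, L.get ⟨d+t, hl⟩ = k)} := by
    rw [Nat.card_congr (Equiv.subtypeEquivRight
      (fun L => and_congr_right (fun _ => hiff L)))]
    rw [Nat.card_congr (hookEquiv k d n hk)]
    haveI : ∀ t : (Finset.range (n+1) : Finset ℕ), Finite
        {L : List ℕ // PartitionOf n L ∧ (L.length = d + 2*(t:ℕ) + 1 ∧
          ∃ hl : d + (t:ℕ) < L.length, L.get ⟨d+(t:ℕ), hl⟩ = k)} :=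
      fun t => finite_partition n _
    rw [card_sigma']
    exact Finset.sum_coe_sort (Finset.range (n+1)) (fun t => Nat.card
      {L : List ℕ // PartitionOf n L ∧ (L.length = d + 2*t + 1 ∧
        ∃ hl : d + t < L.length, L.get ⟨d+t, hl⟩ = k)})
  rw [hL1]
  push_cast
  refine Finset.sum_congr rfl (fun t _ => ?_)
  rw [hE t, mul_assoc]
  exact step3 k d t n hk
end

section
/- For h ≥ 0 and n ≥ 1, the number of partitions of n with an h-fixed hook arising from a part of size 1 equals the number of partitions of n in which the part 1 appears exactly h+1 times. For h = -1, the same holds for all n ≥ 1 (the only exception being n = 0). -/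

lemma sum_map_succ_s7 (M : List ℕ) : (M.map (· + 1)).sum = M.sum + M.length := by
  induction M with
  | nil => simp
  | cons a M ih => simp [ih]; omega

lemma sum_map_pred (P : List ℕ) (hP : ∀ x ∈ P, 1 ≤ x) :
    (P.map (· - 1)).sum + P.length = P.sum := by
  induction P with
  | nil => simp
  | cons a P ih =>
    simp only [List.map_cons, List.sum_cons, List.length_cons]
    have h1 := hP a (by simp)
    have := ih (fun x hx => hP x (by simp [hx]))
    omega

lemma decomp (k : ℕ) (L : List ℕ) (hs : L.Pairwise (· ≥ ·)) (hpos : ∀ x ∈ L, k ≤ x) :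
    L = L.filter (fun x => k + 1 ≤ x) ++ List.replicate (L.count k) k := by
  induction L with
  | nil => simp
  | cons a L ih =>
    have ha : k ≤ a := hpos a (by simp)
    rcases eq_or_lt_of_le ha with rfl | hlt
    · -- a = k : all of L equals k
      have hall : ∀ x ∈ k :: L, x = k := by
        intro x hx
        rcases List.mem_cons.1 hx with rfl | hx
        · rfl
        · exact le_antisymm ((List.pairwise_cons.1 hs).1 x hx) (hpos x (by simp [hx]))
      have hf : (k :: L).filter (fun x => k + 1 ≤ x) = [] := by
        rw [List.filter_eq_nil_iff]
        intro x hx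
        simp [hall x hx]
      have hc : (k :: L).count k = (k :: L).length := by
        rw [List.count_eq_length]
        intro x hx
        exact (hall x hx).symm
      rw [hf, hc, List.nil_append]
      exact (List.eq_replicate_iff.2 ⟨by simp, fun b hb => hall b hb⟩)
    · have hne : a ≠ k := by omega
      have hfc : (a :: L).filter (fun x => k + 1 ≤ x) = a :: L.filter (fun x => k + 1 ≤ x) := by
        rw [List.filter_cons_of_pos]
        simp; omega
      have hcc : (a :: L).count k = L.count k := by
        rw [List.count_cons]
        simp [hne]
      rw [hfc, hcc, List.cons_append]
      congr 1
      exact ih (List.pairwise_cons.1 hs).2 (fun x hx => hpos x (by simp [hx]))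

lemma partlist_decomp (L : List ℕ) (hL : PartList L) :
    L = L.filter (fun x => 2 ≤ x) ++ List.replicate (L.count 1) 1 := by
  have := decomp 1 L hL.1 (fun x hx => hL.2 x hx)
  norm_num at this
  exact this

lemma charA_aux (h : ℤ) (c : ℕ) (hc : (c : ℤ) = h + 1) (M : List ℕ)
    (hM2 : ∀ x ∈ M, 2 ≤ x) (m : ℕ) (hnz : M ++ List.replicate m 1 ≠ []) :
    (∃ i, FixedHookPart h 1 (M ++ List.replicate m 1) i) ↔
      ∃ t, m = M.length + c + 2 * t := by
  set p := M.length with hp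
  have hlen : (M ++ List.replicate m 1).length = p + m := by simp [hp]
  have hli : ((M ++ List.replicate m 1).length : ℤ) = (p : ℤ) + m := by
    rw [hlen]; push_cast; ring
  constructor
  · rintro ⟨i, hi, hget, heq⟩
    have hgi : (M ++ List.replicate m 1)[i]'hi = 1 := hget
    have hpi : p ≤ i := by
      by_contra hcon
      push_neg at hcon
      have h2 : (M ++ List.replicate m 1)[i]'hi = M[i]'hcon :=
        List.getElem_append_left hcon
      have h4 : 2 ≤ M[i]'hcon := hM2 _ (List.getElem_mem _)
      omega
    exact ⟨i - p, by omega⟩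
  · rintro ⟨t, hmt⟩
    have hne : p + c + t ≠ 0 := by
      intro h0
      have hp0 : M = [] := List.length_eq_zero_iff.1 (by omega)
      have hm0 : m = 0 := by omega
      rw [hp0, hm0] at hnz
      simp at hnz
    have htm : t < m := by omega
    refine ⟨p + t, ⟨by omega, ?_, ?_⟩⟩
    · show (M ++ List.replicate m 1)[p + t]'_ = 1
      rw [List.getElem_append_right (Nat.le_add_right p t)]
      simp
    · push_cast
      omega

def fmap (c : ℕ) (L : List ℕ) : List ℕ :=
  (L.filter (fun x => 2 ≤ x)).map (· + 1)
    ++ List.replicate ((L.count 1 - (L.filter (fun x => 2 ≤ x)).length - c) / 2) 2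
    ++ List.replicate c 1

def gmap (c : ℕ) (L : List ℕ) : List ℕ :=
  (L.filter (fun x => 3 ≤ x)).map (· - 1)
    ++ List.replicate ((L.filter (fun x => 3 ≤ x)).length + c + 2 * L.count 2) 1

lemma filter_replicate_nil {m a : ℕ} {p : ℕ → Bool} (hpa : p a = false) :
    (List.replicate m a).filter p = [] := by
  rw [List.filter_eq_nil_iff]
  intro x hx
  rw [List.eq_of_mem_replicate hx, hpa]
  simp

lemma count_eq_zero_of_ge {l : List ℕ} {a k : ℕ} (hk : ∀ x ∈ l, k ≤ x) (ha : a < k) :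
    l.count a = 0 := by
  rw [List.count_eq_zero]
  intro hmem
  exact absurd (hk a hmem) (by omega)

-- compute filter/count on A-form
lemma filter2_Aform (M : List ℕ) (hM2 : ∀ x ∈ M, 2 ≤ x) (m : ℕ) :
    (M ++ List.replicate m 1).filter (fun x => 2 ≤ x) = M := by
  rw [List.filter_append, List.filter_eq_self.2 (by intro x hx; simpa using hM2 x hx),
    filter_replicate_nil (by simp), List.append_nil]

lemma count1_Aform (M : List ℕ) (hM2 : ∀ x ∈ M, 2 ≤ x) (m : ℕ) :
    (M ++ List.replicate m 1).count 1 = m := by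
  rw [List.count_append, count_eq_zero_of_ge hM2 (by omega), List.count_replicate]
  simp

lemma fmap_Aform (c : ℕ) (M : List ℕ) (hM2 : ∀ x ∈ M, 2 ≤ x) (m t : ℕ)
    (hmt : m = M.length + c + 2 * t) :
    fmap c (M ++ List.replicate m 1) =
      M.map (· + 1) ++ List.replicate t 2 ++ List.replicate c 1 := by
  rw [fmap, filter2_Aform M hM2, count1_Aform M hM2,
    show (m - M.length - c) / 2 = t by omega]

-- compute filter/count on B-form
lemma filter3_Bform (P : List ℕ) (hP3 : ∀ x ∈ P, 3 ≤ x) (s c : ℕ) :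
    ((P ++ List.replicate s 2) ++ List.replicate c 1).filter (fun x => 3 ≤ x) = P := by
  rw [List.filter_append, List.filter_append,
    List.filter_eq_self.2 (by intro x hx; simpa using hP3 x hx),
    filter_replicate_nil (by simp), filter_replicate_nil (by simp)]
  simp

lemma count2_Bform (P : List ℕ) (hP3 : ∀ x ∈ P, 3 ≤ x) (s c : ℕ) :
    ((P ++ List.replicate s 2) ++ List.replicate c 1).count 2 = s := by
  rw [List.count_append, List.count_append, count_eq_zero_of_ge hP3 (by omega),
    List.count_replicate, List.count_replicate]
  simp

lemma count1_Bform (P : List ℕ) (hP3 : ∀ x ∈ P, 3 ≤ x) (s c : ℕ) :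
    ((P ++ List.replicate s 2) ++ List.replicate c 1).count 1 = c := by
  rw [List.count_append, List.count_append, count_eq_zero_of_ge hP3 (by omega),
    List.count_replicate, List.count_replicate]
  simp

lemma gmap_Bform (c : ℕ) (P : List ℕ) (hP3 : ∀ x ∈ P, 3 ≤ x) (s : ℕ) :
    gmap c ((P ++ List.replicate s 2) ++ List.replicate c 1) =
      P.map (· - 1) ++ List.replicate (P.length + c + 2 * s) 1 := by
  rw [gmap, filter3_Bform P hP3, count2_Bform P hP3]

lemma sorted_replicate' (r k : ℕ) : (List.replicate r k).Pairwise (· ≥ ·) := by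
  induction r with
  | zero => simp
  | succ n ih =>
    rw [List.replicate_succ]
    exact List.Pairwise.cons (fun b hb => (List.eq_of_mem_replicate hb).le) ih

lemma sorted_append_replicate (Q : List ℕ) (hQs : Q.Pairwise (· ≥ ·)) (k r : ℕ)
    (hQk : ∀ x ∈ Q, k ≤ x) : (Q ++ List.replicate r k).Pairwise (· ≥ ·) := by
  refine List.pairwise_append.2 ⟨hQs, sorted_replicate' r k, ?_⟩
  intro a ha b hb
  rw [List.eq_of_mem_replicate hb]
  exact hQk a ha

lemma sorted_map_succ (M : List ℕ) (hMs : M.Pairwise (· ≥ ·)) :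
    (M.map (· + 1)).Pairwise (· ≥ ·) :=
  List.Pairwise.map _ (fun hab => by omega) hMs

lemma sorted_map_pred (P : List ℕ) (hPs : P.Pairwise (· ≥ ·)) :
    (P.map (· - 1)).Pairwise (· ≥ ·) :=
  List.Pairwise.map _ (fun hab => by omega) hPs

lemma sum_Aform (M : List ℕ) (m : ℕ) : (M ++ List.replicate m 1).sum = M.sum + m := by
  simp [List.sum_append, List.sum_replicate]

lemma f_mem (h : ℤ) (c : ℕ) (hc : (c : ℤ) = h + 1) (n : ℕ) (hn : 1 ≤ n) (L : List ℕ)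
    (hL : PartitionOf n L) (hex : ∃ i, FixedHookPart h 1 L i) :
    PartitionOf n (fmap c L) ∧ (fmap c L).count 1 = c := by
  set M := L.filter (fun x => 2 ≤ x) with hMdef
  set m := L.count 1 with hmdef
  have hM2 : ∀ x ∈ M, 2 ≤ x := by
    intro x hx; rw [hMdef, List.mem_filter] at hx; simpa using hx.2
  have hMs : M.Pairwise (· ≥ ·) := hL.1.1.filter _
  have hdec : L = M ++ List.replicate m 1 := partlist_decomp L hL.1
  have hsum : M.sum + m = n := by rw [← sum_Aform]; rw [← hdec]; exact hL.2
  have hnz : M ++ List.replicate m 1 ≠ [] := by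
    intro he
    obtain ⟨h1, h2⟩ := List.append_eq_nil_iff.1 he
    rw [h1] at hsum
    have : m = 0 := by simpa using congrArg List.length h2
    simp [this] at hsum
    omega
  rw [hdec] at hex
  obtain ⟨t, ht⟩ := (charA_aux h c hc M hM2 m hnz).1 hex
  have hP3 : ∀ x ∈ M.map (· + 1), 3 ≤ x := by
    intro x hx
    obtain ⟨a, ha, rfl⟩ := List.mem_map.1 hx
    have := hM2 a ha; omega
  rw [hdec, fmap_Aform c M hM2 m t ht]
  refine ⟨⟨⟨?_, ?_⟩, ?_⟩, ?_⟩
  · -- sorted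
    refine sorted_append_replicate _ ?_ 1 _ ?_
    · refine sorted_append_replicate _ ?_ 2 _ ?_
      · exact sorted_map_succ M hMs
      · intro x hx
        have := hP3 x hx; omega
    · intro x hx
      rcases List.mem_append.1 hx with hx | hx
      · have := hP3 x hx; omega
      · rw [List.eq_of_mem_replicate hx]; omega
  · intro x hx
    simp only [List.append_assoc, List.mem_append, List.mem_replicate] at hx
    rcases hx with hx | hx | hx
    · have := hP3 x hx; omega
    · omega
    · omega
  · -- sum
    simp only [List.sum_append, List.sum_replicate, smul_eq_mul, sum_map_succ_s7]
    omega
  · exact count1_Bform _ hP3 t c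

lemma exists_t (h : ℤ) (c : ℕ) (hc : (c : ℤ) = h + 1) (n : ℕ) (hn : 1 ≤ n) (L : List ℕ)
    (hL : PartitionOf n L) (hex : ∃ i, FixedHookPart h 1 L i) :
    ∃ t, L.count 1 = (L.filter (fun x => 2 ≤ x)).length + c + 2 * t := by
  set M := L.filter (fun x => 2 ≤ x) with hMdef
  set m := L.count 1 with hmdef
  have hM2 : ∀ x ∈ M, 2 ≤ x := by
    intro x hx; rw [hMdef, List.mem_filter] at hx; simpa using hx.2
  have hdec : L = M ++ List.replicate m 1 := partlist_decomp L hL.1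
  have hsum : M.sum + m = n := by rw [← sum_Aform]; rw [← hdec]; exact hL.2
  have hnz : M ++ List.replicate m 1 ≠ [] := by
    intro he
    obtain ⟨h1, h2⟩ := List.append_eq_nil_iff.1 he
    rw [h1] at hsum
    have : m = 0 := by simpa using congrArg List.length h2
    simp [this] at hsum
    omega
  rw [hdec] at hex
  exact (charA_aux h c hc M hM2 m hnz).1 hex

lemma g_mem (h : ℤ) (c : ℕ) (hc : (c : ℤ) = h + 1) (n : ℕ) (hn : 1 ≤ n) (L : List ℕ)
    (hL : PartitionOf n L) (hcount : L.count 1 = c) :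
    PartitionOf n (gmap c L) ∧ ∃ i, FixedHookPart h 1 (gmap c L) i := by
  set M := L.filter (fun x => 2 ≤ x) with hMdef
  have hM2 : ∀ x ∈ M, 2 ≤ x := by
    intro x hx; rw [hMdef, List.mem_filter] at hx; simpa using hx.2
  have hMs : M.Pairwise (· ≥ ·) := hL.1.1.filter _
  have hdec1 : L = M ++ List.replicate c 1 := by
    rw [← hcount]; exact partlist_decomp L hL.1
  set P := M.filter (fun x => 3 ≤ x) with hPdef
  set s := M.count 2 with hsdef
  have hdec2 : M = P ++ List.replicate s 2 := by
    have := decomp 2 M hMs hM2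
    norm_num at this
    exact this
  have hP3 : ∀ x ∈ P, 3 ≤ x := by
    intro x hx; rw [hPdef, List.mem_filter] at hx; simpa using hx.2
  have hPs : P.Pairwise (· ≥ ·) := hMs.filter _
  have hdec : L = (P ++ List.replicate s 2) ++ List.replicate c 1 := by
    rw [hdec1, hdec2]
  set q := P.length with hqdef
  have hgm : gmap c L = P.map (· - 1) ++ List.replicate (q + c + 2 * s) 1 := by
    rw [hdec, gmap_Bform c P hP3 s]
  have hQ2 : ∀ x ∈ P.map (· - 1), 2 ≤ x := by
    intro x hx
    obtain ⟨a, ha, rfl⟩ := List.mem_map.1 hx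
    have := hP3 a ha; omega
  have hsum : P.sum + 2 * s + c = n := by
    have := hL.2
    rw [hdec] at this
    simp only [List.sum_append, List.sum_replicate, smul_eq_mul] at this
    omega
  have hmapsum : (P.map (· - 1)).sum + q = P.sum :=
    sum_map_pred P (fun x hx => by have := hP3 x hx; omega)
  have hnz : P.map (· - 1) ++ List.replicate (q + c + 2 * s) 1 ≠ [] := by
    intro he
    obtain ⟨h1, h2⟩ := List.append_eq_nil_iff.1 he
    have hq0 : q = 0 := by
      rw [hqdef]; have := congrArg List.length h1; simpa using this
    have h20 : q + c + 2 * s = 0 := by simpa using congrArg List.length h2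
    have hP0 : P = [] := List.length_eq_zero_iff.1 hq0
    rw [hP0] at hsum
    simp at hsum
    omega
  rw [hgm]
  refine ⟨⟨⟨?_, ?_⟩, ?_⟩, ?_⟩
  · refine sorted_append_replicate _ ?_ 1 _ ?_
    · exact sorted_map_pred P hPs
    · intro x hx; have := hQ2 x hx; omega
  · intro x hx
    rcases List.mem_append.1 hx with hx | hx
    · have := hQ2 x hx; omega
    · rw [List.eq_of_mem_replicate hx]; omega
  · simp only [List.sum_append, List.sum_replicate, smul_eq_mul]
    omega
  · exact (charA_aux h c hc (P.map (· - 1)) hQ2 (q + c + 2 * s) hnz).2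
      ⟨s, by rw [List.length_map]⟩

lemma gf (c : ℕ) (L : List ℕ) (hL : PartList L) (t : ℕ)
    (ht : L.count 1 = (L.filter (fun x => 2 ≤ x)).length + c + 2 * t) :
    gmap c (fmap c L) = L := by
  set M := L.filter (fun x => 2 ≤ x) with hMdef
  set m := L.count 1 with hmdef
  have hM2 : ∀ x ∈ M, 2 ≤ x := by
    intro x hx; rw [hMdef, List.mem_filter] at hx; simpa using hx.2
  have hdec : L = M ++ List.replicate m 1 := partlist_decomp L hL
  have hP3 : ∀ x ∈ M.map (· + 1), 3 ≤ x := by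
    intro x hx
    obtain ⟨a, ha, rfl⟩ := List.mem_map.1 hx
    have := hM2 a ha; omega
  rw [hdec, fmap_Aform c M hM2 m t ht, gmap_Bform c (M.map (· + 1)) hP3 t,
    List.map_map]
  have hid : M.map ((fun x => x - 1) ∘ fun x => x + 1) = M := by
    conv_rhs => rw [← List.map_id M]
    apply List.map_congr_left
    intro a _; simp
  rw [hid, List.length_map, ← ht]

lemma fg (c : ℕ) (L : List ℕ) (hL : PartList L) (hcount : L.count 1 = c) :
    fmap c (gmap c L) = L := by
  set M := L.filter (fun x => 2 ≤ x) with hMdef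
  have hM2 : ∀ x ∈ M, 2 ≤ x := by
    intro x hx; rw [hMdef, List.mem_filter] at hx; simpa using hx.2
  have hMs : M.Pairwise (· ≥ ·) := hL.1.filter _
  have hdec1 : L = M ++ List.replicate c 1 := by
    rw [← hcount]; exact partlist_decomp L hL
  set P := M.filter (fun x => 3 ≤ x) with hPdef
  set s := M.count 2 with hsdef
  have hdec2 : M = P ++ List.replicate s 2 := by
    have := decomp 2 M hMs hM2
    norm_num at this
    exact this
  have hP3 : ∀ x ∈ P, 3 ≤ x := by
    intro x hx; rw [hPdef, List.mem_filter] at hx; simpa using hx.2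
  have hdec : L = (P ++ List.replicate s 2) ++ List.replicate c 1 := by
    rw [hdec1, hdec2]
  have hQ2 : ∀ x ∈ P.map (· - 1), 2 ≤ x := by
    intro x hx
    obtain ⟨a, ha, rfl⟩ := List.mem_map.1 hx
    have := hP3 a ha; omega
  rw [hdec, gmap_Bform c P hP3 s,
    fmap_Aform c (P.map (· - 1)) hQ2 (P.length + c + 2 * s) s (by rw [List.length_map]),
    List.map_map]
  have hid : P.map ((fun x => x + 1) ∘ fun x => x - 1) = P := by
    conv_rhs => rw [← List.map_id P]
    apply List.map_congr_left
    intro a ha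
    have := hP3 a ha
    simp
    omega
  rw [hid]


/-- For `h ≥ -1` and `n ≥ 1`, the number of partitions of `n` with an `h`-fixed hook
arising from a part of size 1 equals the number of partitions of `n` in which the part 1
appears exactly `h+1` times. -/
theorem stmt7 (h : ℤ) (hh : -1 ≤ h) (n : ℕ) (hn : 1 ≤ n) :
    Nat.card {L : List ℕ // PartitionOf n L ∧ ∃ i, FixedHookPart h 1 L i} =
      Nat.card {L : List ℕ // PartitionOf n L ∧ L.count 1 = (h + 1).toNat} := by

  set c := (h + 1).toNat with hcdef
  have hc : (c : ℤ) = h + 1 := Int.toNat_of_nonneg (by omega)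
  refine Nat.card_congr
    { toFun := fun L => ⟨fmap c L.1, f_mem h c hc n hn L.1 L.2.1 L.2.2⟩
      invFun := fun L => ⟨gmap c L.1, g_mem h c hc n hn L.1 L.2.1 L.2.2⟩
      left_inv := ?_
      right_inv := ?_ }
  · rintro ⟨L, hL, hex⟩
    apply Subtype.ext
    obtain ⟨t, ht⟩ := exists_t h c hc n hn L hL hex
    exact gf c L hL.1 t ht
  · rintro ⟨L, hL, hcnt⟩
    apply Subtype.ext
    exact fg c L hL.1 hcnt
end

section
/- For any integer h, the number of partitions of n with an h-fixed hook arising from a part of size 1 equals the number of partitions of n - h that have at least 1 - h parts and in which the part 1 appears exactly once. -/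
namespace Stmt9Aux

def fmap (h : ℤ) (L : List ℕ) : List ℕ :=
  (L.take ((((L.length : ℤ) - 1 - h) / 2).toNat)).map (· + 1) ++ [1]

def gmap (h : ℤ) (M : List ℕ) : List ℕ :=
  (M.dropLast).map (· - 1) ++ List.replicate (((M.length : ℤ) + h).toNat) 1

lemma sum_map_add_one (A : List ℕ) : (A.map (· + 1)).sum = A.sum + A.length := by
  induction A with
  | nil => simp
  | cons a t ih => simp [ih]; omega

lemma sum_map_sub_one (A : List ℕ) (hA : ∀ x ∈ A, 1 ≤ x) :
    (A.map (· - 1)).sum + A.length = A.sum := by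
  induction A with
  | nil => simp
  | cons a t ih =>
    have h1 : 1 ≤ a := hA a (by simp)
    have := ih (fun x hx => hA x (by simp [hx]))
    simp only [List.map_cons, List.sum_cons, List.length_cons]
    omega

lemma sorted_get_le {L : List ℕ} (hs : L.Pairwise (· ≥ ·)) {i j : ℕ} (hij : i ≤ j)
    (hj : j < L.length) : L[j] ≤ L[i]'(lt_of_le_of_lt hij hj) := by
  rcases eq_or_lt_of_le hij with rfl | hlt
  · exact le_refl _
  · exact List.pairwise_iff_get.mp hs ⟨i, _⟩ ⟨j, _⟩ hlt

/-- key structure of LHS elements -/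
lemma lhs_struct {h : ℤ} {L : List ℕ} (hP : PartList L) {i : ℕ}
    (hF : FixedHookPart h 1 L i) :
    i < L.length ∧ (L.length : ℤ) = 2 * i + 1 + h ∧
    (((L.length : ℤ) - 1 - h) / 2).toNat = i ∧
    L.drop i = List.replicate (L.length - i) 1 := by
  obtain ⟨hi, h1, heq⟩ := hF
  have hlen : (L.length : ℤ) = 2 * i + 1 + h := by push_cast at heq; linarith
  refine ⟨hi, hlen, ?_, ?_⟩
  · rw [hlen]; ring_nf; omega
  · refine List.eq_replicate_iff.mpr ⟨by simp, ?_⟩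
    intro b hb
    obtain ⟨j, hj, rfl⟩ := List.getElem_of_mem hb
    rw [List.getElem_drop]
    have hij : i + j < L.length := by
      have := hj; rw [List.length_drop] at this; omega
    have hle : L[i + j] ≤ L[i] := sorted_get_le hP.1 (Nat.le_add_right i j) hij
    have hpos : 0 < L[i + j] := hP.2 _ (List.getElem_mem _)
    have : L[i] = 1 := by simpa [List.get_eq_getElem] using h1
    omega

lemma rhs_last {M : List ℕ} (hs : M.Pairwise (· ≥ ·)) (hpos : ∀ x ∈ M, 0 < x)
    (hc : M.count 1 = 1) :
    ∃ hm : 0 < M.length, M[M.length - 1] = 1 ∧ (M.dropLast).count 1 = 0 := by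
  have h1mem : (1 : ℕ) ∈ M := by
    by_contra hn
    rw [List.count_eq_zero_of_not_mem hn] at hc; omega
  obtain ⟨j, hj, hMj⟩ := List.getElem_of_mem h1mem
  have hm : 0 < M.length := by omega
  have hlast : M[M.length - 1] = 1 := by
    have hle : M[M.length - 1] ≤ M[j] := sorted_get_le hs (by omega) (by omega)
    have := hpos M[M.length - 1] (List.getElem_mem _)
    omega
  refine ⟨hm, hlast, ?_⟩
  have hM : M = M.dropLast ++ [M[M.length - 1]] := by
    conv_lhs => rw [← List.dropLast_append_getLast (List.ne_nil_of_length_pos hm)]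
    rw [List.getLast_eq_getElem]
  have := hc
  rw [hM] at this
  rw [List.count_append, hlast] at this
  simpa using this


lemma fmap_mem {h : ℤ} {n : ℕ} {L : List ℕ} (hP : PartitionOf n L) {i : ℕ}
    (hF : FixedHookPart h 1 L i) :
    PartList (fmap h L) ∧ ((fmap h L).sum : ℤ) = (n : ℤ) - h ∧
      (1 : ℤ) - h ≤ (fmap h L).length ∧ (fmap h L).count 1 = 1 := by
  obtain ⟨hi, hlen, hI, hdrop⟩ := lhs_struct hP.1 hF
  set A := L.take i with hA
  have hAlen : A.length = i := by simp [hA]; omega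
  have hfm : fmap h L = A.map (· + 1) ++ [1] := by rw [fmap, hI]
  have hsumL : L.sum = A.sum + (L.length - i) := by
    conv_lhs => rw [← List.take_append_drop i L]
    rw [List.sum_append, hdrop, List.sum_replicate]; simp [hA]
  have hApos : ∀ x ∈ A, 0 < x := fun x hx => hP.1.2 x (List.mem_of_mem_take hx)
  have hsorted : (fmap h L).Pairwise (· ≥ ·) := by
    rw [hfm, List.pairwise_append]
    refine ⟨List.Pairwise.map _ ?_ (List.Pairwise.sublist (List.take_sublist i L) hP.1.1), by simp, ?_⟩
    · intro a b hab; omega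
    · intro a ha b hb
      simp only [List.mem_singleton] at hb
      obtain ⟨x, hx, rfl⟩ := List.mem_map.mp ha
      omega
  have hcount : (fmap h L).count 1 = 1 := by
    rw [hfm, List.count_append]
    have : (A.map (· + 1)).count 1 = 0 := by
      apply List.count_eq_zero.mpr
      intro hmem
      obtain ⟨x, hx, hx1⟩ := List.mem_map.mp hmem
      have := hApos x hx; omega
    simp [this]
  have hfsum : (fmap h L).sum = A.sum + i + 1 := by
    rw [hfm, List.sum_append, sum_map_add_one, hAlen]; simp
  refine ⟨⟨hsorted, ?_⟩, ?_, ?_, hcount⟩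
  · intro x hx
    rw [hfm, List.mem_append] at hx
    rcases hx with hx | hx
    · obtain ⟨y, hy, rfl⟩ := List.mem_map.mp hx; omega
    · simp at hx; omega
  · have hn := hP.2
    rw [hfsum]; omega
  · have : (fmap h L).length = i + 1 := by rw [hfm]; simp [hAlen]
    rw [this]; omega

lemma gmap_mem {h : ℤ} {n : ℕ} {M : List ℕ} (hPL : PartList M)
    (hsum : (M.sum : ℤ) = (n : ℤ) - h) (hlen : (1 : ℤ) - h ≤ M.length)
    (hc : M.count 1 = 1) :
    PartitionOf n (gmap h M) ∧ FixedHookPart h 1 (gmap h M) (M.length - 1) := by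
  obtain ⟨hm, hlast, hc0⟩ := rhs_last hPL.1 hPL.2 hc
  set m := M.length with hmdef
  set B := M.dropLast with hB
  set t := ((m : ℤ) + h).toNat with ht
  have htz : (t : ℤ) = (m : ℤ) + h := by
    rw [ht, Int.toNat_of_nonneg]; omega
  have ht1 : 1 ≤ t := by omega
  have hBlen : B.length = m - 1 := by simp [hB, hmdef]
  have hBmem : ∀ x ∈ B, 2 ≤ x := by
    intro x hx
    have h1 : 0 < x := hPL.2 x ((List.dropLast_sublist M).mem hx)
    have h2 : x ≠ 1 := by
      intro hx1; subst hx1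
      exact absurd hx (List.count_eq_zero.mp hc0)
    omega
  have hMsplit : M = B ++ [1] := by
    conv_lhs => rw [← List.dropLast_append_getLast (List.ne_nil_of_length_pos hm)]
    rw [List.getLast_eq_getElem]
    rw [show M[M.length - 1] = 1 from hlast]
  have hMsum : M.sum = B.sum + 1 := by conv_lhs => rw [hMsplit]; rw [List.sum_append]; simp
  have hglen : (gmap h M).length = (m - 1) + t := by
    rw [gmap, List.length_append, List.length_map, List.length_replicate, ← hB, ← hmdef,
      ← ht, hBlen]
  have hgsum : (gmap h M).sum = (B.map (· - 1)).sum + t := by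
    rw [gmap, List.sum_append, List.sum_replicate, ← hB, ← hmdef, ← ht]; ring
  have hsub : (B.map (· - 1)).sum + B.length = B.sum :=
    sum_map_sub_one B (fun x hx => by have := hBmem x hx; omega)
  constructor
  · refine ⟨⟨?_, ?_⟩, ?_⟩
    · rw [gmap, List.pairwise_append]
      refine ⟨List.Pairwise.map _ ?_ (List.Pairwise.sublist (List.dropLast_sublist M) hPL.1), ?_, ?_⟩
      · intro a b hab; omega
      · exact List.pairwise_replicate.mpr (Or.inr (le_refl 1))
      · intro a ha b hb
        obtain ⟨x, hx, rfl⟩ := List.mem_map.mp ha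
        have := hBmem x hx
        have := List.eq_of_mem_replicate hb
        omega
    · intro x hx
      rw [gmap, List.mem_append] at hx
      rcases hx with hx | hx
      · obtain ⟨y, hy, rfl⟩ := List.mem_map.mp hx
        have := hBmem y hy; omega
      · have := List.eq_of_mem_replicate hx; omega
    · -- sum = n
      rw [hgsum]; omega
  · refine ⟨?_, ?_, ?_⟩
    · rw [hglen]; omega
    · have hb : (M.dropLast.map (· - 1 : ℕ → ℕ)).length = m - 1 := by
        rw [List.length_map, ← hB, hBlen]
      rw [List.get_eq_getElem]
      simp only [gmap]
      rw [List.getElem_append_right (le_of_eq hb)]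
      simp
    · rw [hglen]; push_cast; omega

lemma gf_eq {h : ℤ} {n : ℕ} {L : List ℕ} (hP : PartitionOf n L) {i : ℕ}
    (hF : FixedHookPart h 1 L i) : gmap h (fmap h L) = L := by
  obtain ⟨hi, hlen, hI, hdrop⟩ := lhs_struct hP.1 hF
  set A := L.take i with hA
  have hAlen : A.length = i := by simp [hA]; omega
  have hfm : fmap h L = A.map (· + 1) ++ [1] := by rw [fmap, hI]
  rw [gmap, hfm]
  have hdl : ((A.map (· + 1)) ++ [1]).dropLast = A.map (· + 1) := List.dropLast_concat
  have hle : ((A.map (· + 1)) ++ [1]).length = i + 1 := by simp [hAlen]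
  rw [hdl, hle]
  have h1 : (A.map (· + 1)).map (· - 1) = A := by
    rw [List.map_map]
    have : ∀ a ∈ A, ((· - 1) ∘ (· + 1)) a = id a := by intro a _; simp
    rw [List.map_congr_left this, List.map_id]
  have h2 : (((i + 1 : ℕ) : ℤ) + h).toNat = L.length - i := by omega
  rw [h1, h2, ← hdrop, hA, List.take_append_drop]

lemma fg_eq {h : ℤ} {M : List ℕ} (hPL : PartList M)
    (hlen : (1 : ℤ) - h ≤ M.length) (hc : M.count 1 = 1) :
    fmap h (gmap h M) = M := by
  obtain ⟨hm, hlast, hc0⟩ := rhs_last hPL.1 hPL.2 hc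
  set m := M.length with hmdef
  set B := M.dropLast with hB
  set t := ((m : ℤ) + h).toNat with ht
  have htz : (t : ℤ) = (m : ℤ) + h := by rw [ht, Int.toNat_of_nonneg]; omega
  have hBlen : B.length = m - 1 := by simp [hB, hmdef]
  have hBmem : ∀ x ∈ B, 2 ≤ x := by
    intro x hx
    have h1 : 0 < x := hPL.2 x ((List.dropLast_sublist M).mem hx)
    have h2 : x ≠ 1 := fun hx1 => absurd hx (hx1 ▸ List.count_eq_zero.mp hc0)
    omega
  have hglen : (gmap h M).length = (m - 1) + t := by
    rw [gmap, List.length_append, List.length_map, List.length_replicate, ← hB, ← hmdef,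
      ← ht, hBlen]
  have hI : ((((gmap h M).length : ℤ) - 1 - h) / 2).toNat = m - 1 := by
    rw [hglen]; omega
  have hBmaplen : (B.map (· - 1)).length = m - 1 := by simp [hBlen]
  rw [fmap, hI, gmap, ← hB, ← hmdef, ← ht, List.take_left' hBmaplen]
  have h1 : (B.map (· - 1)).map (· + 1) = B := by
    rw [List.map_map]
    have : ∀ a ∈ B, ((· + 1) ∘ (· - 1)) a = id a := by
      intro a ha; have := hBmem a ha; simp; omega
    rw [List.map_congr_left this, List.map_id]
  rw [h1]
  conv_rhs => rw [← List.dropLast_append_getLast (List.ne_nil_of_length_pos hm)]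
  rw [List.getLast_eq_getElem]
  rw [show M[M.length - 1] = 1 from hlast]

end Stmt9Aux

/-- For any integer `h`, the number of partitions of `n` with an `h`-fixed hook arising
from a part of size 1 equals the number of partitions of `n - h` with at least `1 - h`
parts in which the part 1 appears exactly once. -/


theorem stmt9 (h : ℤ) (n : ℕ) :
    Nat.card {L : List ℕ // PartitionOf n L ∧ ∃ i, FixedHookPart h 1 L i} =
      Nat.card {L : List ℕ // PartList L ∧ (L.sum : ℤ) = (n : ℤ) - h ∧
        (1 : ℤ) - h ≤ L.length ∧ L.count 1 = 1} := by
  apply Nat.card_congr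
  exact {
    toFun := fun L => ⟨Stmt9Aux.fmap h L.1, by
      obtain ⟨hP, i, hF⟩ := L.2; exact Stmt9Aux.fmap_mem hP hF⟩
    invFun := fun M => ⟨Stmt9Aux.gmap h M.1, by
      obtain ⟨hPL, hs, hl, hc⟩ := M.2
      obtain ⟨hPa, hFb⟩ := Stmt9Aux.gmap_mem hPL hs hl hc
      exact ⟨hPa, _, hFb⟩⟩
    left_inv := fun L => by
      obtain ⟨hP, i, hF⟩ := L.2; exact Subtype.ext (Stmt9Aux.gf_eq hP hF)
    right_inv := fun M => by
      obtain ⟨hPL, hs, hl, hc⟩ := M.2; exact Subtype.ext (Stmt9Aux.fg_eq hPL hl hc)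
  }
end

section
/- For integers h and k ≥ 1, the number of partitions of n in which an h-fixed hook arises from a part of size k equals the number of partitions of n + C(k,2) - (h+1) whose minimal excludant (mex) is k and such that h + 1 + (number of parts greater than k) exceeds the number of parts less than k. -/
/-- `k` is the minimal excludant of `L`: `k` is not a part but every positive `j < k` is. -/
def IsMex (L : List ℕ) (k : ℕ) : Prop := k ∉ L ∧ ∀ j, 0 < j → j < k → j ∈ L

namespace S10
open List

/-- The staircase `[k-1, k-2, ..., 1]`. -/
def stairc (k : ℕ) : List ℕ := (List.range' 1 (k-1)).reverse

lemma mem_stairc {k x : ℕ} : x ∈ stairc k ↔ 1 ≤ x ∧ x < 1 + (k-1) := by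
  simp only [stairc, List.mem_reverse, List.mem_range'_1]

lemma mem_stairc' {k x : ℕ} (hk : 1 ≤ k) : x ∈ stairc k ↔ 1 ≤ x ∧ x < k := by
  rw [mem_stairc]; omega

lemma nodup_stairc (k : ℕ) : (stairc k).Nodup := by
  simpa [stairc] using List.nodup_range' (n := k-1) (s := 1)

lemma length_stairc (k : ℕ) : (stairc k).length = k - 1 := by
  simp [stairc]

lemma sorted_stairc (k : ℕ) : (stairc k).Pairwise (· ≥ ·) := by
  rw [stairc, List.pairwise_reverse]
  exact (List.pairwise_lt_range' (s := 1) (n := k-1)).imp fun h => le_of_lt h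

lemma sum_range'_one (m : ℕ) : (List.range' 1 m).sum = (m+1).choose 2 := by
  induction m with
  | zero => simp
  | succ m ih =>
      rw [List.range'_1_concat, List.sum_append, ih]
      simp [Nat.choose_succ_succ (m+1) 1, Nat.choose_one_right]
      omega

lemma sum_stairc {k : ℕ} (hk : 1 ≤ k) : (stairc k).sum = k.choose 2 := by
  have : k - 1 + 1 = k := by omega
  rw [stairc, List.sum_reverse, sum_range'_one, this]

lemma sum_map_succ (l : List ℕ) : (l.map (· + 1)).sum = l.sum + l.length := by
  induction l with
  | nil => simp
  | cons a t ih => simp [ih]; omega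

lemma sum_map_pred (l : List ℕ) (hl : ∀ x ∈ l, 0 < x) :
    (l.map (· - 1)).sum + l.length = l.sum := by
  induction l with
  | nil => simp
  | cons a t ih =>
      have ha := hl a (by simp)
      simp only [List.map_cons, List.sum_cons, List.length_cons]
      have := ih (fun x hx => hl x (by simp [hx]))
      omega

/-- decomposition of a sorted list avoiding `c` into big and small parts -/
lemma sorted_filter_decomp {l : List ℕ} (hs : l.Pairwise (· ≥ ·)) {c : ℕ}
    (hc : ∀ x ∈ l, x ≠ c) :
    l.filter (fun x => c < x) ++ l.filter (fun x => x < c) = l := by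
  induction l with
  | nil => simp
  | cons a t ih =>
      have hs' : t.Pairwise (· ≥ ·) := hs.of_cons
      have hat : ∀ x ∈ t, x ≤ a := fun x hx => List.rel_of_pairwise_cons hs hx
      rcases lt_or_gt_of_ne (hc a (by simp)) with hlt | hgt
      · -- a < c : every element < c
        have h1 : (a :: t).filter (fun x => c < x) = [] := by
          rw [List.filter_eq_nil_iff]
          intro x hx
          simp only [decide_eq_true_eq]
          rcases List.mem_cons.1 hx with rfl | hx
          · omega
          · have := hat x hx; omega
        have h2 : (a :: t).filter (fun x => x < c) = a :: t := by
          rw [List.filter_eq_self]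
          intro x hx
          simp only [decide_eq_true_eq]
          rcases List.mem_cons.1 hx with rfl | hx
          · omega
          · have := hat x hx; omega
        rw [h1, h2]; rfl
      · -- c < a
        have h1 : (a :: t).filter (fun x => c < x) = a :: t.filter (fun x => c < x) := by
          simp [List.filter_cons, hgt]
        have h2 : (a :: t).filter (fun x => x < c) = t.filter (fun x => x < c) := by
          have : ¬ (a < c) := by omega
          simp [List.filter_cons, this]
        rw [h1, h2, List.cons_append, ih hs' (fun x hx => hc x (by simp [hx]))]

/-- decomposition of a sorted positive list into parts ≥ 2 and trailing ones -/
lemma ones_decomp {l : List ℕ} (hs : l.Pairwise (· ≥ ·)) (hpos : ∀ x ∈ l, 0 < x) :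
    l.filter (fun x => 2 ≤ x) ++
      List.replicate (l.length - (l.filter (fun x => 2 ≤ x)).length) 1 = l := by
  induction l with
  | nil => simp
  | cons a t ih =>
      have hs' : t.Pairwise (· ≥ ·) := hs.of_cons
      have hat : ∀ x ∈ t, x ≤ a := fun x hx => List.rel_of_pairwise_cons hs hx
      by_cases h2 : 2 ≤ a
      · have h1 : (a :: t).filter (fun x => 2 ≤ x) = a :: t.filter (fun x => 2 ≤ x) := by
          simp [List.filter_cons, h2]
        rw [h1]
        have hlen : (a :: t).length - (a :: t.filter (fun x => 2 ≤ x)).length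
            = t.length - (t.filter (fun x => 2 ≤ x)).length := by
          simp
        rw [hlen, List.cons_append, ih hs' (fun x hx => hpos x (by simp [hx]))]
      · -- a = 1, everything is 1
        have ha1 : a = 1 := by have := hpos a (by simp); omega
        have hall : ∀ x ∈ a :: t, x = 1 := by
          intro x hx
          rcases List.mem_cons.1 hx with rfl | hx
          · exact ha1
          · have := hat x hx; have := hpos x (by simp [hx]); omega
        have hf : (a :: t).filter (fun x => 2 ≤ x) = [] := by
          rw [List.filter_eq_nil_iff]
          intro x hx
          have := hall x hx
          simp only [decide_eq_true_eq]; omega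
        rw [hf, List.nil_append]
        simp only [List.length_nil, Nat.sub_zero]
        exact ((List.eq_replicate_iff).2 ⟨rfl, hall⟩).symm

section Maps
variable (h : ℤ) (k : ℕ)

/-- forward map: `L = α ++ k :: β` at position `i` goes to
`(α+1) ++ sort(staircase ++ (β ∩ [2,k] - 1))`. -/
def fcore (L : List ℕ) (i : ℕ) : List ℕ :=
  (L.take i).map (· + 1) ++
    List.insertionSort (· ≥ ·)
      (stairc k ++ ((L.drop (i+1)).filter (fun x => 2 ≤ x)).map (· - 1))

/-- backward map -/
def gcore (M : List ℕ) : List ℕ :=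
  (M.filter (fun x => k < x)).map (· - 1) ++ k ::
    (((M.filter (fun x => x < k)).diff (stairc k)).map (· + 1) ++
      List.replicate (h + ((M.filter (fun x => k < x)).length : ℤ) + 1 - (k : ℤ)
        - (((M.filter (fun x => x < k)).diff (stairc k)).length : ℤ)).toNat 1)

end Maps

section Left
variable {h : ℤ} {k : ℕ} (hk : 1 ≤ k) {n : ℕ} {L : List ℕ} {i : ℕ}
  (hs : L.Pairwise (· ≥ ·)) (hpos : ∀ x ∈ L, 0 < x) (hsum : L.sum = n)
  (hi : i < L.length) (hik : L[i] = k)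
  (heq : (k : ℤ) + L.length - (i + 1) = (i + 1) + h)

include hs hi hik in
lemma take_ge : ∀ x ∈ L.take i, k ≤ x := by
  intro x hx
  have h1 : L = L.take i ++ L.drop i := (List.take_append_drop i L).symm
  have h2 : List.Pairwise (· ≥ ·) (L.take i ++ L.drop i) := h1 ▸ hs
  have hkd : k ∈ L.drop i := by
    have h0 : (L.drop i)[0]'(by rw [List.length_drop]; omega) = L[i] := by
      simp [List.getElem_drop]
    rw [← hik, ← h0]
    exact List.getElem_mem _
  exact (List.pairwise_append.1 h2).2.2 x hx k hkd

include hs hi hik in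
lemma drop_le : ∀ x ∈ L.drop (i+1), x ≤ k := by
  intro x hx
  have h1 : L = L.take (i+1) ++ L.drop (i+1) := (List.take_append_drop (i+1) L).symm
  have h2 : List.Pairwise (· ≥ ·) (L.take (i+1) ++ L.drop (i+1)) := h1 ▸ hs
  have hkt : k ∈ L.take (i+1) := by
    have hlen : i < (L.take (i+1)).length := by
      rw [List.length_take]; omega
    have h0 : (L.take (i+1))[i]'(by rw [List.length_take]; omega) = L[i] :=
      List.getElem_take
    rw [← hik, ← h0]
    exact List.getElem_mem _
  exact (List.pairwise_append.1 h2).2.2 k hkt x hx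

include hi heq in
lemma len_drop_eq : ((L.drop (i+1)).length : ℤ) = (i : ℤ) + 1 + h - k := by
  have : (L.drop (i+1)).length = L.length - (i+1) := List.length_drop
  have hle : i + 1 ≤ L.length := hi
  omega

end Left

section Left
variable {h : ℤ} {k : ℕ} {n : ℕ} {L : List ℕ} {i : ℕ}

lemma f_mem (hk : 1 ≤ k)
    (hs : L.Pairwise (· ≥ ·)) (hpos : ∀ x ∈ L, 0 < x) (hsum : L.sum = n)
    (hi : i < L.length) (hik : L[i] = k)
    (heq : (k : ℤ) + L.length - (i + 1) = (i + 1) + h) :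
    PartList (fcore k L i) ∧
      ((fcore k L i).sum : ℤ) = (n : ℤ) + (k.choose 2 : ℤ) - (h + 1) ∧
      IsMex (fcore k L i) k ∧
      ((fcore k L i).countP (fun x => decide (x < k)) : ℤ) <
        h + 1 + ((fcore k L i).countP (fun x => decide (k < x)) : ℤ) := by
  set β := L.drop (i+1) with hβ
  set F := β.filter (fun x => 2 ≤ x) with hF
  set T := F.map (· - 1) with hT
  set inner := stairc k ++ T with hinner
  set W := List.insertionSort (· ≥ ·) inner with hW
  set P1 := (L.take i).map (· + 1) with hP1
  have hfc : fcore k L i = P1 ++ W := rfl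
  have hWperm : W.Perm inner := List.perm_insertionSort _ _
  have hβle : ∀ x ∈ β, x ≤ k := drop_le hs hi hik
  have hβpos : ∀ x ∈ β, 0 < x := fun x hx => hpos x (List.mem_of_mem_drop hx)
  have hTlt : ∀ x ∈ T, 0 < x ∧ x < k := by
    intro x hx
    rw [hT] at hx
    obtain ⟨y, hy, rfl⟩ := List.mem_map.1 hx
    have h2 := List.of_mem_filter hy
    simp only [decide_eq_true_eq] at h2
    have h3 := hβle y (List.mem_of_mem_filter hy)
    omega
  have hWlt : ∀ x ∈ W, 0 < x ∧ x < k := by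
    intro x hx
    rcases List.mem_append.1 (hWperm.mem_iff.1 hx) with hx | hx
    · have := (mem_stairc' hk).1 hx; omega
    · exact hTlt x hx
  have hP1gt : ∀ x ∈ P1, k < x := by
    intro x hx
    obtain ⟨y, hy, rfl⟩ := List.mem_map.1 hx
    have := take_ge hs hi hik y hy
    omega
  -- sortedness
  have hsP1 : P1.Pairwise (· ≥ ·) :=
    (List.Pairwise.sublist (List.take_sublist i L) hs).map _ (fun a b hab => by omega)
  have hsW : W.Pairwise (· ≥ ·) := List.pairwise_insertionSort _ _
  have hsorted : (fcore k L i).Pairwise (· ≥ ·) := by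
    rw [hfc, List.pairwise_append]
    exact ⟨hsP1, hsW, fun a ha b hb => by
      have := hP1gt a ha; have := hWlt b hb; omega⟩
  have hposf : ∀ x ∈ fcore k L i, 0 < x := by
    intro x hx
    rcases List.mem_append.1 (hfc ▸ hx) with hx | hx
    · have := hP1gt x hx; omega
    · exact (hWlt x hx).1
  -- length facts
  have hFlen : F.length ≤ β.length := List.length_filter_le _ _
  have hlend : (β.length : ℤ) = (i : ℤ) + 1 + h - k := len_drop_eq hi heq
  -- sum facts
  have hLsplit : L.take i ++ L[i] :: β = L := by
    rw [hβ, List.getElem_cons_drop, List.take_append_drop]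
  have hLsum : (L.take i).sum + k + β.sum = n := by
    have := congrArg List.sum hLsplit
    simp only [List.sum_append, List.sum_cons, hik] at this
    omega
  have hβdecomp : F ++ List.replicate (β.length - F.length) 1 = β :=
    ones_decomp (List.Pairwise.sublist (List.drop_sublist _ _) hs) hβpos
  have hβsum : β.sum = F.sum + (β.length - F.length) := by
    have := congrArg List.sum hβdecomp
    rw [List.sum_append, List.sum_replicate, smul_eq_mul, mul_one] at this
    omega
  have hTsum : T.sum + F.length = F.sum :=
    sum_map_pred F (fun x hx => by
      have := List.of_mem_filter hx; simp only [decide_eq_true_eq] at this; omega)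
  have hP1sum : P1.sum = (L.take i).sum + i := by
    rw [hP1, sum_map_succ, List.length_take_of_le (le_of_lt hi)]
  have hfsum : (fcore k L i).sum = P1.sum + (stairc k).sum + T.sum := by
    rw [hfc, List.sum_append, hWperm.sum_eq, hinner, List.sum_append]; ring
  refine ⟨⟨hsorted, hposf⟩, ?_, ?_, ?_⟩
  · -- sum
    have hstair : (stairc k).sum = k.choose 2 := sum_stairc hk
    omega
  · -- mex
    constructor
    · intro hkmem
      rcases List.mem_append.1 (hfc ▸ hkmem) with hx | hx
      · have := hP1gt k hx; omega
      · have := hWlt k hx; omega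
    · intro j hj0 hjk
      rw [hfc]
      refine List.mem_append.2 (Or.inr ?_)
      exact hWperm.mem_iff.2 (List.mem_append.2 (Or.inl ((mem_stairc' hk).2 ⟨hj0, hjk⟩)))
  · -- counts
    have hc1 : (fcore k L i).countP (fun x => decide (x < k)) = (k - 1) + T.length := by
      rw [hfc, List.countP_append, hWperm.countP_eq, hinner, List.countP_append]
      have e1 : P1.countP (fun x => decide (x < k)) = 0 := by
        rw [List.countP_eq_zero]
        intro x hx
        have := hP1gt x hx
        simp only [decide_eq_true_eq]; omega
      have e2 : (stairc k).countP (fun x => decide (x < k)) = (stairc k).length := by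
        rw [List.countP_eq_length]
        intro x hx
        have := (mem_stairc' hk).1 hx
        simp only [decide_eq_true_eq]; omega
      have e3 : T.countP (fun x => decide (x < k)) = T.length := by
        rw [List.countP_eq_length]
        intro x hx
        have := hTlt x hx
        simp only [decide_eq_true_eq]; omega
      rw [e1, e2, e3, length_stairc]
      omega
    have hc2 : (fcore k L i).countP (fun x => decide (k < x)) = i := by
      rw [hfc, List.countP_append, hWperm.countP_eq, hinner, List.countP_append]
      have e1 : P1.countP (fun x => decide (k < x)) = P1.length := by
        rw [List.countP_eq_length]
        intro x hx
        have := hP1gt x hx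
        simp only [decide_eq_true_eq]; omega
      have e2 : (stairc k).countP (fun x => decide (k < x)) = 0 := by
        rw [List.countP_eq_zero]
        intro x hx
        have := (mem_stairc' hk).1 hx
        simp only [decide_eq_true_eq]; omega
      have e3 : T.countP (fun x => decide (k < x)) = 0 := by
        rw [List.countP_eq_zero]
        intro x hx
        have := hTlt x hx
        simp only [decide_eq_true_eq]; omega
      rw [e1, e2, e3, hP1, List.length_map, List.length_take_of_le (le_of_lt hi)]
      omega
    rw [hc1, hc2]
    have hTlen : T.length = F.length := List.length_map _
    omega

end Left

section Right
variable {h : ℤ} {k : ℕ} {n : ℕ} {M : List ℕ}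

lemma g_mem (hk : 1 ≤ k)
    (hs : M.Pairwise (· ≥ ·)) (hpos : ∀ x ∈ M, 0 < x)
    (hsum : (M.sum : ℤ) = (n : ℤ) + (k.choose 2 : ℤ) - (h + 1))
    (hmex : IsMex M k)
    (hcnt : (M.countP (fun x => decide (x < k)) : ℤ) <
      h + 1 + (M.countP (fun x => decide (k < x)) : ℤ)) :
    PartitionOf n (gcore h k M) ∧
      FixedHookPart h k (gcore h k M) (M.filter (fun x => k < x)).length := by
  set A := M.filter (fun x => k < x) with hA
  set S := M.filter (fun x => x < k) with hS
  set T := S.diff (stairc k) with hT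
  set b := A.length with hb
  set t := T.length with ht
  set m := (h + (b : ℤ) + 1 - (k : ℤ) - (t : ℤ)).toNat with hm
  have hgc : gcore h k M = A.map (· - 1) ++ k :: (T.map (· + 1) ++ List.replicate m 1) := rfl
  have hMk : ∀ x ∈ M, x ≠ k := fun x hx hxk => hmex.1 (hxk ▸ hx)
  have hdec : A ++ S = M := sorted_filter_decomp hs hMk
  have hApos : ∀ x ∈ A, k < x := by
    intro x hx
    have := List.of_mem_filter hx
    simpa using this
  have hSlt : ∀ x ∈ S, 0 < x ∧ x < k := by
    intro x hx
    have h1 := List.of_mem_filter hx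
    have h2 := hpos x (List.mem_of_mem_filter hx)
    simp only [decide_eq_true_eq] at h1
    exact ⟨h2, h1⟩
  have hsub : (stairc k).Subperm S := by
    refine List.Nodup.subperm (nodup_stairc k) ?_
    intro j hj
    have hj' := (mem_stairc' hk).1 hj
    have hjM : j ∈ M := hmex.2 j hj'.1 hj'.2
    exact List.mem_filter.2 ⟨hjM, by simpa using hj'.2⟩
  have hle : (↑(stairc k) : Multiset ℕ) ≤ ↑S := Multiset.coe_le.2 hsub
  have hTm : (↑T : Multiset ℕ) = ↑S - ↑(stairc k) := Multiset.coe_sub S (stairc k)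
  have hid : (↑T : Multiset ℕ) + ↑(stairc k) = ↑S := by
    rw [hTm]; exact tsub_add_cancel_of_le hle
  have hlenS : t + (k - 1) = S.length := by
    have := congrArg Multiset.card hid
    simpa [Multiset.coe_card, length_stairc] using this
  have hsumS : T.sum + (stairc k).sum = S.sum := by
    have := congrArg Multiset.sum hid
    simpa [Multiset.sum_coe] using this
  have hTsl : T.Sublist S := List.diff_sublist _ _
  have hTs : T.Pairwise (· ≥ ·) :=
    List.Pairwise.sublist hTsl (List.Pairwise.filter _ hs)
  have hTlt : ∀ x ∈ T, 0 < x ∧ x < k := fun x hx => hSlt x (hTsl.mem hx)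
  have hcS : M.countP (fun x => decide (x < k)) = S.length :=
    List.countP_eq_length_filter
  have hcA : M.countP (fun x => decide (k < x)) = b :=
    List.countP_eq_length_filter
  have htle : (t : ℤ) ≤ h + b + 1 - k := by
    rw [hcS, hcA] at hcnt
    omega
  have hmz : (m : ℤ) = h + (b : ℤ) + 1 - k - t := by
    rw [hm]; exact Int.toNat_of_nonneg (by omega)
  -- sortedness
  have hsA : (A.map (· - 1)).Pairwise (· ≥ ·) :=
    (List.Pairwise.filter _ hs).map _ (fun a c hac => by omega)
  have hstail : (T.map (· + 1) ++ List.replicate m 1).Pairwise (· ≥ ·) := by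
    rw [List.pairwise_append]
    refine ⟨hTs.map _ (fun a c hac => by omega), ?_, ?_⟩
    · exact List.pairwise_replicate.2 (Or.inr le_rfl)
    · intro a ha c hc
      obtain ⟨y, hy, rfl⟩ := List.mem_map.1 ha
      have := List.eq_of_mem_replicate hc
      omega
  have hsorted : (gcore h k M).Pairwise (· ≥ ·) := by
    rw [hgc, List.pairwise_append]
    refine ⟨hsA, ?_, ?_⟩
    · rw [List.pairwise_cons]
      refine ⟨?_, hstail⟩
      intro c hc
      rcases List.mem_append.1 hc with hc | hc
      · obtain ⟨y, hy, rfl⟩ := List.mem_map.1 hc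
        have := hTlt y hy
        omega
      · have := List.eq_of_mem_replicate hc
        omega
    · intro a ha c hc
      obtain ⟨y, hy, rfl⟩ := List.mem_map.1 ha
      have hya := hApos y hy
      rcases List.mem_cons.1 hc with rfl | hc
      · omega
      rcases List.mem_append.1 hc with hc | hc
      · obtain ⟨z, hz, rfl⟩ := List.mem_map.1 hc
        have := hTlt z hz
        omega
      · have := List.eq_of_mem_replicate hc
        omega
  have hposg : ∀ x ∈ gcore h k M, 0 < x := by
    intro x hx
    rw [hgc] at hx
    rcases List.mem_append.1 hx with hx | hx
    · obtain ⟨y, hy, rfl⟩ := List.mem_map.1 hx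
      have := hApos y hy
      omega
    rcases List.mem_cons.1 hx with rfl | hx
    · omega
    rcases List.mem_append.1 hx with hx | hx
    · obtain ⟨y, hy, rfl⟩ := List.mem_map.1 hx
      omega
    · have := List.eq_of_mem_replicate hx
      omega
  -- sums
  have hsA' : (A.map (· - 1)).sum + b = A.sum :=
    sum_map_pred A (fun x hx => by have := hApos x hx; omega)
  have hsT' : (T.map (· + 1)).sum = T.sum + t := by
    rw [sum_map_succ]
  have hMsum : A.sum + S.sum = M.sum := by
    have := congrArg List.sum hdec
    rw [List.sum_append] at this
    omega
  have hstair : (stairc k).sum = k.choose 2 := sum_stairc hk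
  have hgsum : (gcore h k M).sum
      = (A.map (· - 1)).sum + (k + ((T.map (· + 1)).sum + m)) := by
    rw [hgc, List.sum_append, List.sum_cons, List.sum_append, List.sum_replicate,
      smul_eq_mul, mul_one]
  have hglen : (gcore h k M).length = b + (1 + (t + m)) := by
    rw [hgc, List.length_append, List.length_cons, List.length_append,
      List.length_map, List.length_map, List.length_replicate, ← hb, ← ht]
    omega
  have hblt : b < (gcore h k M).length := by omega
  refine ⟨⟨⟨hsorted, hposg⟩, ?_⟩, hblt, ?_, ?_⟩
  · -- sum = n
    omega
  · -- get = k
    show (gcore h k M)[b] = k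
    have hlA : (A.map (· - 1)).length = b := by rw [List.length_map]
    rw [List.getElem_of_eq hgc, List.getElem_append_right (by omega)]
    simp [hlA]
  · -- hook equation
    rw [hglen]
    push_cast
    omega

end Right

section RoundTrip
variable {h : ℤ} {k : ℕ} {L M : List ℕ} {i : ℕ}

/-- the position of the fixed hook, recovered from the length -/
def idx (h : ℤ) (k : ℕ) (L : List ℕ) : ℕ :=
  ((((k : ℤ) + L.length - h) / 2) - 1).toNat

lemma idx_eq (hfhp : FixedHookPart h k L i) : idx h k L = i := by
  obtain ⟨hi, _, heq⟩ := hfhp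
  have hlen : i < L.length := hi
  rw [idx]
  omega

lemma gf (hk : 1 ≤ k)
    (hs : L.Pairwise (· ≥ ·)) (hpos : ∀ x ∈ L, 0 < x)
    (hi : i < L.length) (hik : L[i] = k)
    (heq : (k : ℤ) + L.length - (i + 1) = (i + 1) + h) :
    gcore h k (fcore k L i) = L := by
  set β := L.drop (i+1) with hβ
  set F := β.filter (fun x => 2 ≤ x) with hF
  set T := F.map (· - 1) with hT
  set inner := stairc k ++ T with hinner
  set W := List.insertionSort (· ≥ ·) inner with hW
  set P1 := (L.take i).map (· + 1) with hP1
  have hfc : fcore k L i = P1 ++ W := rfl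
  have hWperm : W.Perm inner := List.perm_insertionSort _ _
  have hβle : ∀ x ∈ β, x ≤ k := drop_le hs hi hik
  have hβpos : ∀ x ∈ β, 0 < x := fun x hx => hpos x (List.mem_of_mem_drop hx)
  have hβs : β.Pairwise (· ≥ ·) := List.Pairwise.sublist (List.drop_sublist _ _) hs
  have hTlt : ∀ x ∈ T, 0 < x ∧ x < k := by
    intro x hx
    rw [hT] at hx
    obtain ⟨y, hy, rfl⟩ := List.mem_map.1 hx
    have h2 := List.of_mem_filter hy
    simp only [decide_eq_true_eq] at h2
    have h3 := hβle y (List.mem_of_mem_filter hy)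
    omega
  have hWlt : ∀ x ∈ W, 0 < x ∧ x < k := by
    intro x hx
    rcases List.mem_append.1 (hWperm.mem_iff.1 hx) with hx | hx
    · have := (mem_stairc' hk).1 hx; omega
    · exact hTlt x hx
  have hP1gt : ∀ x ∈ P1, k < x := by
    intro x hx
    obtain ⟨y, hy, rfl⟩ := List.mem_map.1 hx
    have := take_ge hs hi hik y hy
    omega
  have hlend : (β.length : ℤ) = (i : ℤ) + 1 + h - k := len_drop_eq hi heq
  have hFlen : F.length ≤ β.length := List.length_filter_le _ _
  -- the two filters of fcore
  have hfA : (fcore k L i).filter (fun x => k < x) = P1 := by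
    rw [hfc, List.filter_append]
    have e1 : P1.filter (fun x => k < x) = P1 :=
      List.filter_eq_self.2 (fun x hx => by simpa using hP1gt x hx)
    have e2 : W.filter (fun x => k < x) = [] :=
      List.filter_eq_nil_iff.2 (fun x hx => by
        have := hWlt x hx; simp only [decide_eq_true_eq]; omega)
    rw [e1, e2, List.append_nil]
  have hfS : (fcore k L i).filter (fun x => x < k) = W := by
    rw [hfc, List.filter_append]
    have e1 : P1.filter (fun x => x < k) = [] :=
      List.filter_eq_nil_iff.2 (fun x hx => by
        have := hP1gt x hx; simp only [decide_eq_true_eq]; omega)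
    have e2 : W.filter (fun x => x < k) = W :=
      List.filter_eq_self.2 (fun x hx => by
        have := hWlt x hx; simp only [decide_eq_true_eq]; omega)
    rw [e1, e2, List.nil_append]
  -- W.diff (stairc k) = T
  have hTs : T.Pairwise (· ≥ ·) :=
    (List.Pairwise.filter _ hβs).map _ (fun a c hac => by omega)
  have hTw : W.diff (stairc k) = T := by
    refine (fun p s => List.Perm.eq_of_pairwise' s hTs p) (Multiset.coe_eq_coe.1 ?_) ?_
    · rw [← Multiset.coe_sub]
      have : (↑W : Multiset ℕ) = ↑inner := Multiset.coe_eq_coe.2 hWperm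
      rw [this, hinner]
      show ((↑(stairc k) : Multiset ℕ) + ↑T) - ↑(stairc k) = ↑T
      exact add_tsub_cancel_left _ _
    · exact List.Pairwise.sublist (List.diff_sublist _ _)
        (List.pairwise_insertionSort _ _)
  have hgc : gcore h k (fcore k L i)
      = P1.map (· - 1) ++ k ::
        (T.map (· + 1) ++ List.replicate
          (h + (P1.length : ℤ) + 1 - (k : ℤ) - (T.length : ℤ)).toNat 1) := by
    simp only [gcore, hfA, hfS, hTw]
  have hlP1 : P1.length = i := by
    rw [hP1, List.length_map, List.length_take_of_le (le_of_lt hi)]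
  have hlT : T.length = F.length := by rw [hT, List.length_map]
  have hmq : (h + (P1.length : ℤ) + 1 - (k : ℤ) - (T.length : ℤ)).toNat
      = β.length - F.length := by
    rw [hlP1, hlT]
    omega
  have e1 : P1.map (· - 1) = L.take i := by
    rw [hP1, List.map_map]
    have : ((· - 1) ∘ (· + 1) : ℕ → ℕ) = id := by funext x; simp
    rw [this, List.map_id]
  have e2 : T.map (· + 1) = F := by
    rw [hT, List.map_map]
    refine Eq.trans (List.map_congr_left ?_) (List.map_id F)
    intro x hx
    have := List.of_mem_filter hx
    simp only [decide_eq_true_eq] at this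
    simp only [Function.comp_apply, id_eq]
    omega
  rw [hgc, hmq, e1, e2, ones_decomp hβs hβpos]
  rw [← hik, hβ, List.getElem_cons_drop, List.take_append_drop]

lemma fg (hk : 1 ≤ k)
    (hs : M.Pairwise (· ≥ ·)) (hpos : ∀ x ∈ M, 0 < x)
    (hmex : IsMex M k) :
    fcore k (gcore h k M) (M.filter (fun x => k < x)).length = M := by
  set A := M.filter (fun x => k < x) with hA
  set S := M.filter (fun x => x < k) with hS
  set T := S.diff (stairc k) with hT
  set b := A.length with hb
  set t := T.length with ht
  set m := (h + (b : ℤ) + 1 - (k : ℤ) - (t : ℤ)).toNat with hm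
  have hgc : gcore h k M = A.map (· - 1) ++ k :: (T.map (· + 1) ++ List.replicate m 1) := rfl
  have hMk : ∀ x ∈ M, x ≠ k := fun x hx hxk => hmex.1 (hxk ▸ hx)
  have hdec : A ++ S = M := sorted_filter_decomp hs hMk
  have hApos : ∀ x ∈ A, k < x := by
    intro x hx
    have := List.of_mem_filter hx
    simpa using this
  have hSlt : ∀ x ∈ S, 0 < x ∧ x < k := by
    intro x hx
    have h1 := List.of_mem_filter hx
    have h2 := hpos x (List.mem_of_mem_filter hx)
    simp only [decide_eq_true_eq] at h1
    exact ⟨h2, h1⟩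
  have hsub : (stairc k).Subperm S := by
    refine List.Nodup.subperm (nodup_stairc k) ?_
    intro j hj
    have hj' := (mem_stairc' hk).1 hj
    have hjM : j ∈ M := hmex.2 j hj'.1 hj'.2
    exact List.mem_filter.2 ⟨hjM, by simpa using hj'.2⟩
  have hle : (↑(stairc k) : Multiset ℕ) ≤ ↑S := Multiset.coe_le.2 hsub
  have hid : (↑T : Multiset ℕ) + ↑(stairc k) = ↑S := by
    rw [hT, ← Multiset.coe_sub]
    exact tsub_add_cancel_of_le hle
  have hTsl : T.Sublist S := List.diff_sublist _ _
  have hTlt : ∀ x ∈ T, 0 < x ∧ x < k := fun x hx => hSlt x (hTsl.mem hx)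
  have hlA : (A.map (· - 1)).length = b := by rw [List.length_map]
  -- take and drop of gcore
  have htk : (gcore h k M).take b = A.map (· - 1) := by
    rw [hgc]
    exact List.take_left' hlA
  have hdr : (gcore h k M).drop (b + 1) = T.map (· + 1) ++ List.replicate m 1 := by
    rw [hgc]
    have : b + 1 = (A.map (· - 1) ++ [k]).length := by
      rw [List.length_append, hlA, List.length_singleton]
    rw [show A.map (· - 1) ++ k :: (T.map (· + 1) ++ List.replicate m 1)
          = (A.map (· - 1) ++ [k]) ++ (T.map (· + 1) ++ List.replicate m 1) by
        simp,
      List.drop_left' this.symm]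
  have e1 : ((gcore h k M).take b).map (· + 1) = A := by
    rw [htk, List.map_map]
    refine Eq.trans (List.map_congr_left ?_) (List.map_id A)
    intro x hx
    have := hApos x hx
    simp only [Function.comp_apply, id_eq]
    omega
  have e2 : ((gcore h k M).drop (b + 1)).filter (fun x => 2 ≤ x) = T.map (· + 1) := by
    rw [hdr, List.filter_append]
    have f1 : (T.map (· + 1)).filter (fun x => 2 ≤ x) = T.map (· + 1) := by
      refine List.filter_eq_self.2 ?_
      intro x hx
      obtain ⟨y, hy, rfl⟩ := List.mem_map.1 hx
      have := hTlt y hy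
      simp only [decide_eq_true_eq]
      omega
    have f2 : (List.replicate m 1).filter (fun x => (2:ℕ) ≤ x) = [] := by
      refine List.filter_eq_nil_iff.2 ?_
      intro x hx
      have := List.eq_of_mem_replicate hx
      simp only [decide_eq_true_eq]
      omega
    rw [f1, f2, List.append_nil]
  have e3 : (T.map (· + 1)).map (· - 1) = T := by
    rw [List.map_map]
    refine Eq.trans (List.map_congr_left ?_) (List.map_id T)
    intro x hx
    simp
  have hsS : S.Pairwise (· ≥ ·) := List.Pairwise.filter _ hs
  have e4 : List.insertionSort (· ≥ ·) (stairc k ++ T) = S := by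
    refine (fun p => List.Perm.eq_of_pairwise' (List.pairwise_insertionSort _ _) hsS p) ?_
    refine (List.perm_insertionSort _ _).trans (Multiset.coe_eq_coe.1 ?_)
    show (↑(stairc k) : Multiset ℕ) + ↑T = ↑S
    rw [add_comm]
    exact hid
  show ((gcore h k M).take b).map (· + 1) ++
      List.insertionSort (· ≥ ·)
        (stairc k ++ (((gcore h k M).drop (b+1)).filter (fun x => 2 ≤ x)).map (· - 1)) = M
  rw [e1, e2, e3, e4]
  exact hdec

end RoundTrip

end S10

/-- The number of partitions of `n` with an `h`-fixed hook arising from a part of size `k`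
equals the number of partitions of `n + C(k,2) - (h+1)` with mex `k` such that
`h + 1 + #(parts > k) > #(parts < k)`. -/
theorem stmt10 (h : ℤ) (k : ℕ) (hk : 1 ≤ k) (n : ℕ) :
    Nat.card {L : List ℕ // PartitionOf n L ∧ ∃ i, FixedHookPart h k L i} =
      Nat.card {L : List ℕ // PartList L ∧
        (L.sum : ℤ) = (n : ℤ) + (k.choose 2 : ℤ) - (h + 1) ∧ IsMex L k ∧
        (L.countP (fun x => decide (x < k)) : ℤ) <
          h + 1 + (L.countP (fun x => decide (k < x)) : ℤ)} := by
  apply Nat.card_congr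
  refine Equiv.mk
    (fun p => ⟨S10.fcore k p.1 (S10.idx h k p.1), ?_⟩)
    (fun q => ⟨S10.gcore h k q.1, ?_⟩)
    ?_ ?_
  · obtain ⟨⟨⟨hs, hpos⟩, hsum⟩, hex⟩ := p.2
    obtain ⟨i, hfhp⟩ := hex
    rw [S10.idx_eq hfhp]
    obtain ⟨hi, hik, heq⟩ := hfhp
    exact S10.f_mem hk hs hpos hsum hi (by simpa using hik) heq
  · obtain ⟨⟨hs, hpos⟩, hsum, hmex, hcnt⟩ := q.2
    have hg := S10.g_mem (n := n) hk hs hpos hsum hmex hcnt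
    exact ⟨hg.1, _, hg.2⟩
  · intro p
    apply Subtype.ext
    show S10.gcore h k (S10.fcore k p.1 (S10.idx h k p.1)) = p.1
    obtain ⟨i, hfhp⟩ := p.2.2
    rw [S10.idx_eq hfhp]
    obtain ⟨hi, hik, heq⟩ := hfhp
    exact S10.gf hk p.2.1.1.1 p.2.1.1.2 hi (by simpa using hik) heq
  · intro q
    apply Subtype.ext
    show S10.fcore k (S10.gcore h k q.1) (S10.idx h k (S10.gcore h k q.1)) = q.1
    obtain ⟨⟨hs, hpos⟩, hsum, hmex, hcnt⟩ := q.2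
    have hg := S10.g_mem (n := n) hk hs hpos hsum hmex hcnt
    rw [S10.idx_eq hg.2]
    exact S10.fg hk hs hpos hmex
end
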